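/- arXiv:2401.14473 — 9 statements merged into one kernel-verified Lean document; each statement's English description precedes it below -/
import Mathlib

section
/- Let 0 < R ≤ ∞ and let (U_t)_{t∈(0,R)} be a family of nonnegative real-valued random variables with E(U_t) > 0 and E(U_t^p) < ∞ for all t, for some fixed p > 1. If E(U_t^p) ~ E(U_t)^p as t ↑ R (i.e., lim_{t↑R} E(U_t^p)/E(U_t)^p = 1), then for every β ∈ (0, p], E(U_t^β) ~ E(U_t)^β as t ↑ R. -/
open Filter MeasureTheory Topology Real
open scoped ENNReal

noncomputable section

section Aux
variable {Ω : Type*} [MeasurableSpace Ω] {μ : Measure Ω}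

lemma rpow_add'' (x : ℝ≥0∞) (hx : x ≠ ⊤) {a b : ℝ} (ha : 0 ≤ a) (hb : 0 ≤ b) :
    x ^ (a + b) = x ^ a * x ^ b := by
  rcases eq_or_ne x 0 with rfl | hx0
  · rcases eq_or_lt_of_le ha with rfl | ha'
    · simp
    rcases eq_or_lt_of_le hb with rfl | hb'
    · simp
    · rw [ENNReal.zero_rpow_of_pos ha', ENNReal.zero_rpow_of_pos hb',
        ENNReal.zero_rpow_of_pos (by linarith), zero_mul]
  · exact ENNReal.rpow_add a b hx0 hx

lemma lconv (μ : Measure Ω) {g : Ω → ℝ≥0∞} (hg : Measurable g) (hfin : ∀ ω, g ω ≠ ⊤)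
    {θ u v : ℝ} (hθ : 0 < θ) (hθ1 : θ < 1) (hu : 0 ≤ u) (hv : 0 ≤ v) :
    ∫⁻ ω, g ω ^ (θ * u + (1 - θ) * v) ∂μ ≤
      (∫⁻ ω, g ω ^ u ∂μ) ^ θ * (∫⁻ ω, g ω ^ v ∂μ) ^ (1 - θ) := by
  have hpq : (1/θ).HolderConjugate (1/(1-θ)) := by
    rw [Real.holderConjugate_iff]
    constructor
    · rw [lt_div_iff₀ hθ]; linarith
    · rw [one_div, one_div, inv_inv, inv_inv]; ring
  have h := ENNReal.lintegral_mul_le_Lp_mul_Lq μ hpq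
    (f := fun ω => g ω ^ (θ * u)) (g := fun ω => g ω ^ ((1 - θ) * v))
    (hg.pow measurable_const).aemeasurable (hg.pow measurable_const).aemeasurable
  have e1 : ∀ ω, ((fun ω => g ω ^ (θ * u)) * fun ω => g ω ^ ((1 - θ) * v)) ω
      = g ω ^ (θ * u + (1 - θ) * v) := fun ω => by
    rw [Pi.mul_apply, ← rpow_add'' _ (hfin ω) (mul_nonneg hθ.le hu) (mul_nonneg (by linarith) hv)]
  calc ∫⁻ ω, g ω ^ (θ * u + (1 - θ) * v) ∂μ
      = ∫⁻ ω, ((fun ω => g ω ^ (θ * u)) * fun ω => g ω ^ ((1 - θ) * v)) ω ∂μ := by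
        exact lintegral_congr fun ω => (e1 ω).symm
    _ ≤ (∫⁻ ω, (g ω ^ (θ * u)) ^ (1/θ) ∂μ) ^ (1/(1/θ))
        * (∫⁻ ω, (g ω ^ ((1 - θ) * v)) ^ (1/(1-θ)) ∂μ) ^ (1/(1/(1-θ))) := by
        simpa [one_div] using h
    _ = (∫⁻ ω, g ω ^ u ∂μ) ^ θ * (∫⁻ ω, g ω ^ v ∂μ) ^ (1 - θ) := by
        rw [one_div_one_div, one_div_one_div]
        congr 1
        · congr 1
          refine lintegral_congr fun ω => ?_
          rw [← ENNReal.rpow_mul, mul_one_div, mul_div_cancel_left₀ _ hθ.ne']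
        · congr 1
          refine lintegral_congr fun ω => ?_
          rw [← ENNReal.rpow_mul, mul_one_div,
            mul_div_cancel_left₀ _ (by linarith : (0:ℝ) < 1 - θ).ne']

lemma key (μ : Measure Ω) [IsProbabilityMeasure μ] {f : Ω → ℝ} (hf : Measurable f)
    (h0 : ∀ ω, 0 ≤ f ω) {p : ℝ} (hp : 1 < p)
    (hInt : Integrable (fun ω => f ω ^ p) μ) (hpos : 0 < ∫ ω, f ω ∂μ)
    {β : ℝ} (hβ0 : 0 < β) (hβp : β ≤ p) :
    ((∫ ω, f ω ^ p ∂μ) / (∫ ω, f ω ∂μ) ^ p) ^ (min ((β - 1) / (p - 1)) 0) ≤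
        (∫ ω, f ω ^ β ∂μ) / (∫ ω, f ω ∂μ) ^ β ∧
      (∫ ω, f ω ^ β ∂μ) / (∫ ω, f ω ∂μ) ^ β ≤
        ((∫ ω, f ω ^ p ∂μ) / (∫ ω, f ω ∂μ) ^ p) ^ (max ((β - 1) / (p - 1)) 0) := by
  have hp0 : (0:ℝ) < p := by linarith
  have hp1 : (0:ℝ) < p - 1 := by linarith
  set g : Ω → ℝ≥0∞ := fun ω => ENNReal.ofReal (f ω) with hg_def
  have hg : Measurable g := hf.ennreal_ofReal
  have hgfin : ∀ ω, g ω ≠ ⊤ := fun ω => ENNReal.ofReal_ne_top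
  set J : ℝ → ℝ≥0∞ := fun s => ∫⁻ ω, g ω ^ s ∂μ with hJ_def
  have hIeq : ∀ s : ℝ, 0 ≤ s → ∫ ω, f ω ^ s ∂μ = (J s).toReal := by
    intro s hs
    rw [integral_eq_lintegral_of_nonneg_ae
      (Filter.Eventually.of_forall fun ω => Real.rpow_nonneg (h0 ω) s)
      ((hf.pow measurable_const).aestronglyMeasurable)]
    congr 1
    exact lintegral_congr fun ω => by
      rw [ENNReal.ofReal_rpow_of_nonneg (h0 ω) hs]
  have hf1 : (fun ω => f ω ^ (1:ℝ)) = f := funext fun ω => Real.rpow_one _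
  have hI1eq : ∫ ω, f ω ∂μ = (J 1).toReal := by rw [← hf1]; exact hIeq 1 zero_le_one
  have hJ0 : J 0 = 1 := by
    simp only [hJ_def, ENNReal.rpow_zero, lintegral_one, measure_univ]
  have hJp_fin : J p ≠ ⊤ := by
    have h2 := (hasFiniteIntegral_iff_ofReal
      (Filter.Eventually.of_forall fun ω => Real.rpow_nonneg (h0 ω) p)).1 hInt.2
    have h3 : J p = ∫⁻ ω, ENNReal.ofReal (f ω ^ p) ∂μ :=
      lintegral_congr fun ω => ENNReal.ofReal_rpow_of_nonneg (h0 ω) hp0.le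
    rw [h3]; exact h2.ne
  have hHold : ∀ {θ u v : ℝ}, 0 < θ → θ < 1 → 0 ≤ u → 0 ≤ v →
      J (θ * u + (1 - θ) * v) ≤ (J u) ^ θ * (J v) ^ (1 - θ) :=
    fun hθ hθ1 hu hv => lconv μ hg hgfin hθ hθ1 hu hv
  have hJ1pos : 0 < (J 1).toReal := by rw [← hI1eq]; exact hpos
  have hJ1 : J 1 ≠ 0 ∧ J 1 ≠ ⊤ := by
    rcases ENNReal.toReal_pos_iff.1 hJ1pos with ⟨h1, h2⟩
    exact ⟨h1.ne', h2.ne⟩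
  have hJfin : ∀ s : ℝ, 0 ≤ s → s ≤ p → J s ≠ ⊤ := by
    intro s hs0 hsp
    rcases eq_or_lt_of_le hsp with rfl | hsp
    · exact hJp_fin
    rcases eq_or_lt_of_le hs0 with rfl | hs0
    · rw [hJ0]; exact ENNReal.one_ne_top
    have hθ0 : 0 < 1 - s / p := by
      rw [sub_pos, div_lt_one hp0]; exact hsp
    have hθ1 : 1 - s / p < 1 := by
      rw [sub_lt_self_iff]; positivity
    have h := hHold hθ0 hθ1 le_rfl hp0.le (u := 0) (v := p)
    rw [show (1 - s/p) * 0 + (1 - (1 - s/p)) * p = s by field_simp; ring] at h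
    rw [hJ0, ENNReal.one_rpow, one_mul] at h
    exact ne_top_of_le_ne_top
      (ENNReal.rpow_ne_top_of_nonneg (by linarith [div_pos hs0 hp0, (div_lt_one hp0).2 hsp]) hJp_fin) h
  have hJpos : ∀ s : ℝ, 0 ≤ s → s ≤ p → J s ≠ 0 := by
    intro s hs0 hsp
    rcases eq_or_lt_of_le hs0 with rfl | hs0
    · rw [hJ0]; exact one_ne_zero
    rcases lt_trichotomy s 1 with hs1 | rfl | hs1
    · have hps : 0 < p - s := by linarith
      have hθ0 : 0 < (p-1)/(p-s) := div_pos hp1 hps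
      have hθ1 : (p-1)/(p-s) < 1 := (div_lt_one hps).2 (by linarith)
      have h := hHold hθ0 hθ1 hs0.le hp0.le (u := s) (v := p)
      rw [show (p-1)/(p-s) * s + (1 - (p-1)/(p-s)) * p = 1 by field_simp; ring] at h
      intro hzero
      rw [hzero, ENNReal.zero_rpow_of_pos hθ0, zero_mul] at h
      exact hJ1.1 (le_zero_iff.mp h)
    · exact hJ1.1
    · have hθ0 : 0 < 1/s := by positivity
      have hθ1 : 1/s < 1 := by rw [div_lt_one (by linarith)]; exact hs1
      have h := hHold hθ0 hθ1 hs0.le le_rfl (u := s) (v := 0)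
      rw [show (1/s) * s + (1 - 1/s) * 0 = 1 by field_simp; ring] at h
      intro hzero
      rw [hzero, ENNReal.zero_rpow_of_pos hθ0, zero_mul] at h
      exact hJ1.1 (le_zero_iff.mp h)
  have hIpos : ∀ s : ℝ, 0 ≤ s → s ≤ p → 0 < (J s).toReal := fun s hs0 hsp =>
    ENNReal.toReal_pos (hJpos s hs0 hsp) (hJfin s hs0 hsp)
  have hL0 : Real.log (J 0).toReal = 0 := by rw [hJ0, ENNReal.toReal_one, Real.log_one]
  have hLH : ∀ u v w a1 a2 : ℝ, 0 ≤ u → u ≤ p → 0 ≤ v → v ≤ p → 0 ≤ w → w ≤ p →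
      0 < a1 → 0 < a2 → a1 * u + a2 * v = (a1 + a2) * w →
      (a1 + a2) * Real.log (J w).toReal ≤
        a1 * Real.log (J u).toReal + a2 * Real.log (J v).toReal := by
    intro u v w a1 a2 hu0 hup hv0 hvp hw0 hwp ha1 ha2 hw
    have ha12 : 0 < a1 + a2 := by linarith
    set θ := a1 / (a1 + a2) with hθdef
    have hθ0 : 0 < θ := div_pos ha1 ha12
    have hθ1 : θ < 1 := (div_lt_one ha12).2 (by linarith)
    have h := hHold hθ0 hθ1 hu0 hv0 (u := u) (v := v)
    rw [show θ * u + (1 - θ) * v = w by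
      rw [hθdef]; field_simp; linarith [hw]] at h
    have hru : (0:ℝ) < (J u).toReal := hIpos u hu0 hup
    have hrv : (0:ℝ) < (J v).toReal := hIpos v hv0 hvp
    have hrw : (0:ℝ) < (J w).toReal := hIpos w hw0 hwp
    have hne : (J u) ^ θ * (J v) ^ (1 - θ) ≠ ⊤ :=
      ENNReal.mul_ne_top (ENNReal.rpow_ne_top_of_nonneg hθ0.le (hJfin u hu0 hup))
        (ENNReal.rpow_ne_top_of_nonneg (by linarith) (hJfin v hv0 hvp))
    have h2 : (J w).toReal ≤ (J u).toReal ^ θ * (J v).toReal ^ (1 - θ) := by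
      have := ENNReal.toReal_mono hne h
      rwa [ENNReal.toReal_mul, ← ENNReal.toReal_rpow, ← ENNReal.toReal_rpow] at this
    have h3 : Real.log (J w).toReal ≤
        θ * Real.log (J u).toReal + (1 - θ) * Real.log (J v).toReal := by
      calc Real.log (J w).toReal
          ≤ Real.log ((J u).toReal ^ θ * (J v).toReal ^ (1 - θ)) :=
            (Real.log_le_log_iff hrw (by positivity)).2 h2
        _ = θ * Real.log (J u).toReal + (1 - θ) * Real.log (J v).toReal := by
            rw [Real.log_mul (by positivity) (by positivity),
              Real.log_rpow hru, Real.log_rpow hrv]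
    have e1 : θ * (a1 + a2) = a1 := by rw [hθdef]; field_simp
    have e2 : (1 - θ) * (a1 + a2) = a2 := by rw [hθdef]; field_simp; ring
    calc (a1 + a2) * Real.log (J w).toReal
        ≤ (a1 + a2) * (θ * Real.log (J u).toReal + (1 - θ) * Real.log (J v).toReal) :=
          mul_le_mul_of_nonneg_left h3 ha12.le
      _ = a1 * Real.log (J u).toReal + a2 * Real.log (J v).toReal := by
          linear_combination Real.log (J u).toReal * e1 + Real.log (J v).toReal * e2
  -- abbreviations
  rw [hIeq β hβ0.le, hIeq p hp0.le, hI1eq]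
  set Ia := (J 1).toReal with hIa_def
  set Ib := (J β).toReal with hIb_def
  set Ic := (J p).toReal with hIc_def
  set La := Real.log Ia with hLa_def
  set Lb := Real.log Ib with hLb_def
  set Lc := Real.log Ic with hLc_def
  have hIa : 0 < Ia := hJ1pos
  have hIb : 0 < Ib := hIpos β hβ0.le hβp
  have hIc : 0 < Ic := hIpos p hp0.le le_rfl
  have hApos : 0 < Ic / Ia ^ p := div_pos hIc (Real.rpow_pos_of_pos hIa p)
  have hrpos : 0 < Ib / Ia ^ β := div_pos hIb (Real.rpow_pos_of_pos hIa β)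
  have hlogA : Real.log (Ic / Ia ^ p) = Lc - p * La := by
    rw [Real.log_div hIc.ne' (Real.rpow_pos_of_pos hIa p).ne', Real.log_rpow hIa]
  have hlogr : Real.log (Ib / Ia ^ β) = Lb - β * La := by
    rw [Real.log_div hIb.ne' (Real.rpow_pos_of_pos hIa β).ne', Real.log_rpow hIa]
  -- Jensen for p : p * La ≤ Lc
  have hJen : p * La ≤ Lc := by
    have h := hLH p 0 1 1 (p - 1) hp0.le le_rfl le_rfl hp0.le zero_le_one hp.le
      one_pos hp1 (by ring)
    rw [hL0] at h
    linarith
  set e := (β - 1) / (p - 1) with he_def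
  rcases lt_trichotomy β 1 with hβ1 | rfl | hβ1
  · -- β < 1
    have he_neg : e < 0 := div_neg_of_neg_of_pos (by linarith) hp1
    rw [min_eq_left he_neg.le, max_eq_right he_neg.le, Real.rpow_zero]
    have hup : Lb ≤ β * La := by
      have h := hLH 1 0 β β (1 - β) zero_le_one hp.le le_rfl hp0.le hβ0.le hβp
        hβ0 (by linarith) (by ring)
      rw [hL0] at h
      linarith
    have hlow : (p - β) * La ≤ (p - 1) * Lb + (1 - β) * Lc := by
      have h := hLH β p 1 (p - 1) (1 - β) hβ0.le hβp hp0.le le_rfl zero_le_one hp.le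
        hp1 (by linarith) (by ring)
      linarith
    constructor
    · apply (Real.log_le_log_iff (Real.rpow_pos_of_pos hApos e) hrpos).1
      rw [Real.log_rpow hApos, hlogA, hlogr, he_def]
      rw [div_mul_eq_mul_div, div_le_iff₀ hp1]
      nlinarith [hlow]
    · apply (Real.log_le_log_iff hrpos one_pos).1
      rw [hlogr, Real.log_one]
      linarith
  · -- β = 1
    have hIbIa : Ib = Ia := rfl
    have he0 : e = 0 := by rw [he_def]; norm_num
    rw [hIbIa, Real.rpow_one, div_self hIa.ne', he0, min_self, max_self, Real.rpow_zero]
    exact ⟨le_refl 1, le_refl 1⟩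
  · -- 1 < β
    have he_pos : 0 < e := div_pos (by linarith) hp1
    rw [min_eq_right he_pos.le, max_eq_left he_pos.le, Real.rpow_zero]
    have hlow : β * La ≤ Lb := by
      have h := hLH β 0 1 1 (β - 1) hβ0.le hβp le_rfl hp0.le zero_le_one hp.le
        one_pos (by linarith) (by ring)
      rw [hL0] at h
      linarith
    constructor
    · apply (Real.log_le_log_iff one_pos hrpos).1
      rw [hlogr, Real.log_one]
      linarith
    · apply (Real.log_le_log_iff hrpos (Real.rpow_pos_of_pos hApos e)).1
      rw [Real.log_rpow hApos, hlogA, hlogr, he_def]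
      rw [div_mul_eq_mul_div, le_div_iff₀ hp1]
      rcases eq_or_lt_of_le hβp with rfl | hβp'
      · have hLbLc : Lb = Lc := rfl
        rw [hLbLc]
        nlinarith [hJen]
      · have h := hLH 1 p β (p - β) (β - 1) zero_le_one hp.le hp0.le le_rfl hβ0.le hβp
          (by linarith) (by linarith) (by ring)
        nlinarith [h]

end Aux

/-- The filter describing `t ↑ R`: `atTop` if `R = ∞`, else approach `R` from below. -/
def nhdsLT (R : ℝ≥0∞) : Filter ℝ :=
  if R = ⊤ then atTop else nhdsWithin R.toReal (Set.Iio R.toReal)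

/-- let `0 < R ≤ ∞` and `(U_t)_{t ∈ (0,R)}` be nonnegative random
variables with `E(U_t) > 0` and `E(U_t^p) < ∞`, for a fixed `p > 1`. If
`E(U_t^p)/E(U_t)^p → 1` as `t ↑ R`, then for every `β ∈ (0,p]`,
`E(U_t^β)/E(U_t)^β → 1` as `t ↑ R`. -/
theorem moment_comparison {Ω : Type*} [MeasurableSpace Ω] (μ : Measure Ω)
    [IsProbabilityMeasure μ] (R : ℝ≥0∞) (hR : 0 < R) (U : ℝ → Ω → ℝ) (p : ℝ)
    (hp : 1 < p)
    (hmeas : ∀ t : ℝ, 0 < t → ENNReal.ofReal t < R → Measurable (U t))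
    (hnonneg : ∀ t : ℝ, 0 < t → ENNReal.ofReal t < R → ∀ ω, 0 ≤ U t ω)
    (hLp : ∀ t : ℝ, 0 < t → ENNReal.ofReal t < R →
      Integrable (fun ω => U t ω ^ p) μ)
    (hpos : ∀ t : ℝ, 0 < t → ENNReal.ofReal t < R → 0 < ∫ ω, U t ω ∂μ)
    (hlim : Tendsto (fun t => (∫ ω, U t ω ^ p ∂μ) / (∫ ω, U t ω ∂μ) ^ p)
      (nhdsLT R) (𝓝 1)) :
    ∀ β : ℝ, 0 < β → β ≤ p →
      Tendsto (fun t => (∫ ω, U t ω ^ β ∂μ) / (∫ ω, U t ω ∂μ) ^ β)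
        (nhdsLT R) (𝓝 1) := by
  intro β hβ0 hβp
  have hev : ∀ᶠ t in nhdsLT R, 0 < t ∧ ENNReal.ofReal t < R := by
    rcases eq_or_ne R ⊤ with rfl | hRtop
    · rw [_root_.nhdsLT, if_pos rfl]
      filter_upwards [eventually_gt_atTop 0] with t ht
      exact ⟨ht, ENNReal.ofReal_lt_top⟩
    · rw [_root_.nhdsLT, if_neg hRtop]
      have hR0 : 0 < R.toReal := ENNReal.toReal_pos hR.ne' hRtop
      have h1 : ∀ᶠ t in nhdsWithin R.toReal (Set.Iio R.toReal), t < R.toReal :=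
        eventually_mem_nhdsWithin
      have h2 : ∀ᶠ t in nhdsWithin R.toReal (Set.Iio R.toReal), 0 < t :=
        (isOpen_Ioi.eventually_mem (Set.mem_Ioi.2 hR0)).filter_mono nhdsWithin_le_nhds
      filter_upwards [h1, h2] with t ht1 ht2
      exact ⟨ht2, (ENNReal.ofReal_lt_iff_lt_toReal ht2.le hRtop).2 ht1⟩
  have hmin : Tendsto
      (fun t => ((∫ ω, U t ω ^ p ∂μ) / (∫ ω, U t ω ∂μ) ^ p) ^ (min ((β - 1) / (p - 1)) 0))
      (nhdsLT R) (𝓝 1) := by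
    have h := hlim.rpow_const (p := min ((β - 1) / (p - 1)) 0) (Or.inl one_ne_zero)
    rwa [Real.one_rpow] at h
  have hmax : Tendsto
      (fun t => ((∫ ω, U t ω ^ p ∂μ) / (∫ ω, U t ω ∂μ) ^ p) ^ (max ((β - 1) / (p - 1)) 0))
      (nhdsLT R) (𝓝 1) := by
    have h := hlim.rpow_const (p := max ((β - 1) / (p - 1)) 0) (Or.inl one_ne_zero)
    rwa [Real.one_rpow] at h
  refine tendsto_of_tendsto_of_tendsto_of_le_of_le' hmin hmax ?_ ?_
  · filter_upwards [hev] with t ht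
    exact (key μ (hmeas t ht.1 ht.2) (hnonneg t ht.1 ht.2) hp (hLp t ht.1 ht.2)
      (hpos t ht.1 ht.2) hβ0 hβp).1
  · filter_upwards [hev] with t ht
    exact (key μ (hmeas t ht.1 ht.2) (hnonneg t ht.1 ht.2) hp (hLp t ht.1 ht.2)
      (hpos t ht.1 ht.2) hβ0 hβp).2

end
end

section
/- Let f be a power series in the class K with radius of convergence R. For every λ > 1 and t > 0 with λt < R, one has m_f(t)·ln λ ≤ ln( f(λt)/f(t) ) ≤ m_f(λt)·ln λ. -/
open Filter MeasureTheory Topology Real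
open scoped ENNReal

noncomputable section

/-- The class `K`: nonnegative coefficients, `a 0 > 0`, some `a n > 0` with `n ≥ 1`,
and radius of convergence exactly `R` (all power-type sums converge for `0 < t < R`,
and the basic sum diverges for `t > R`). -/
def IsKClass (a : ℕ → ℝ) (R : ℝ≥0∞) : Prop :=
  (∀ n, 0 ≤ a n) ∧ 0 < a 0 ∧ (∃ n, 1 ≤ n ∧ 0 < a n) ∧
  (∀ β t : ℝ, 0 < t → ENNReal.ofReal t < R →
    Summable (fun n : ℕ => (n : ℝ) ^ β * a n * t ^ n)) ∧
  (∀ t : ℝ, 0 < t → R < ENNReal.ofReal t → ¬ Summable (fun n : ℕ => a n * t ^ n))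

/-- `f(t) = Σ aₙ tⁿ`. -/
def fsum (a : ℕ → ℝ) (t : ℝ) : ℝ := ∑' n : ℕ, a n * t ^ n

/-- `E(X_t^β) = (Σ n^β aₙ tⁿ)/f(t)`. -/
def moment (a : ℕ → ℝ) (β : ℝ) (t : ℝ) : ℝ :=
  (∑' n : ℕ, (n : ℝ) ^ β * a n * t ^ n) / fsum a t

/-- The mean `m_f(t) = E(X_t)`. -/
def mf (a : ℕ → ℝ) (t : ℝ) : ℝ := moment a 1 t

/-- The variance `σ_f²(t) = E(X_t²) − m_f(t)²`. -/
def varf (a : ℕ → ℝ) (t : ℝ) : ℝ := moment a 2 t - (mf a t) ^ 2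

/-- `σ_f(t)`, the nonnegative square root of the variance. -/
def sigmaf (a : ℕ → ℝ) (t : ℝ) : ℝ := Real.sqrt (varf a t)

/-- `f` is a clan if `σ_f(t)/m_f(t) → 0` as `t ↑ R`. -/
def IsClan (a : ℕ → ℝ) (R : ℝ≥0∞) : Prop :=
  Tendsto (fun t => sigmaf a t / mf a t) (nhdsLT R) (𝓝 0)

lemma key_jensen (b : ℕ → ℝ) (hb : ∀ n, 0 ≤ b n) (hsum : Summable b)
    (hn : Summable fun n : ℕ => (n : ℝ) * b n) (c m : ℝ)
    (hm : ∑' n : ℕ, (n : ℝ) * b n = m * ∑' n : ℕ, b n)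
    (hc : Summable fun n : ℕ => b n * Real.exp (c * n)) :
    (∑' n : ℕ, b n) * Real.exp (c * m) ≤ ∑' n : ℕ, b n * Real.exp (c * n) := by
  have hle : ∀ n : ℕ,
      (b n + c * ((n : ℝ) * b n) - c * m * b n) * Real.exp (c * m)
        ≤ b n * Real.exp (c * n) := by
    intro n
    have h1 : 1 + c * ((n : ℝ) - m) ≤ Real.exp (c * ((n : ℝ) - m)) := by
      have := Real.add_one_le_exp (c * ((n : ℝ) - m)); linarith
    have h2 : b n * (1 + c * ((n : ℝ) - m)) ≤ b n * Real.exp (c * ((n : ℝ) - m)) :=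
      mul_le_mul_of_nonneg_left h1 (hb n)
    have h3 : (b n + c * ((n : ℝ) * b n) - c * m * b n) * Real.exp (c * m)
        = b n * (1 + c * ((n : ℝ) - m)) * Real.exp (c * m) := by ring
    have h4 : b n * Real.exp (c * ((n : ℝ) - m)) * Real.exp (c * m)
        = b n * Real.exp (c * n) := by
      rw [mul_assoc, ← Real.exp_add]; ring_nf
    calc (b n + c * ((n : ℝ) * b n) - c * m * b n) * Real.exp (c * m)
        = b n * (1 + c * ((n : ℝ) - m)) * Real.exp (c * m) := h3
      _ ≤ b n * Real.exp (c * ((n : ℝ) - m)) * Real.exp (c * m) := by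
          exact mul_le_mul_of_nonneg_right h2 (Real.exp_pos _).le
      _ = b n * Real.exp (c * n) := h4
  have hsl : Summable fun n : ℕ => (b n + c * ((n : ℝ) * b n) - c * m * b n) * Real.exp (c * m) :=
    (((hsum.add (hn.mul_left c)).sub (hsum.mul_left (c * m))).mul_right _)
  have hts := Summable.tsum_le_tsum hle hsl hc
  have heq : ∑' n : ℕ, (b n + c * ((n : ℝ) * b n) - c * m * b n) * Real.exp (c * m)
      = (∑' n : ℕ, b n) * Real.exp (c * m) := by
    rw [tsum_mul_right, Summable.tsum_sub (hsum.add (hn.mul_left c)) (hsum.mul_left (c * m)),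
      Summable.tsum_add hsum (hn.mul_left c), tsum_mul_left, tsum_mul_left, hm]
    ring
  linarith [hts, heq.ge]

/-- Simić's lemma: for `f ∈ K`, `λ > 1`, `t > 0` with `λt < R`,
`m_f(t)·ln λ ≤ ln(f(λt)/f(t)) ≤ m_f(λt)·ln λ`. -/
theorem mf_log_le_log_ratio_le (a : ℕ → ℝ) (R : ℝ≥0∞) (hR : 0 < R)
    (hK : IsKClass a R) (t l : ℝ) (ht : 0 < t) (hl : 1 < l)
    (hlt : ENNReal.ofReal (l * t) < R) :
    mf a t * Real.log l ≤ Real.log (fsum a (l * t) / fsum a t) ∧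
    Real.log (fsum a (l * t) / fsum a t) ≤ mf a (l * t) * Real.log l := by
  obtain ⟨ha, ha0, -, hSum, -⟩ := hK
  have hl0 : 0 < l := lt_trans one_pos hl
  have hs : 0 < l * t := mul_pos hl0 ht
  have htlt : t < l * t := by nlinarith
  have htR : ENNReal.ofReal t < R :=
    lt_of_le_of_lt (ENNReal.ofReal_le_ofReal htlt.le) hlt
  -- summability facts
  have sum0 : ∀ s : ℝ, 0 < s → ENNReal.ofReal s < R → Summable (fun n : ℕ => a n * s ^ n) := by
    intro s hs hsR
    have := hSum 0 s hs hsR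
    simpa [Real.rpow_zero] using this
  have sum1 : ∀ s : ℝ, 0 < s → ENNReal.ofReal s < R →
      Summable (fun n : ℕ => (n : ℝ) * (a n * s ^ n)) := by
    intro s hs hsR
    have := hSum 1 s hs hsR
    simpa [Real.rpow_one, mul_assoc] using this
  have fpos : ∀ s : ℝ, 0 < s → ENNReal.ofReal s < R → 0 < fsum a s := by
    intro s hs hsR
    refine Summable.tsum_pos (sum0 s hs hsR) (fun n => mul_nonneg (ha n) (pow_nonneg hs.le n)) 0 ?_
    simpa using ha0
  have ft := fpos t ht htR
  have fs := fpos (l * t) hs hlt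
  -- mean identities
  have hmt : ∑' n : ℕ, (n : ℝ) * (a n * t ^ n) = mf a t * ∑' n : ℕ, a n * t ^ n := by
    have : mf a t = (∑' n : ℕ, (n : ℝ) * (a n * t ^ n)) / fsum a t := by
      unfold mf moment
      congr 1
      exact tsum_congr fun n => by rw [Real.rpow_one, mul_assoc]
    rw [this, fsum, div_mul_cancel₀]
    exact ne_of_gt ft
  have hms : ∑' n : ℕ, (n : ℝ) * (a n * (l * t) ^ n)
      = mf a (l * t) * ∑' n : ℕ, a n * (l * t) ^ n := by
    have : mf a (l * t) = (∑' n : ℕ, (n : ℝ) * (a n * (l * t) ^ n)) / fsum a (l * t) := by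
      unfold mf moment
      congr 1
      exact tsum_congr fun n => by rw [Real.rpow_one, mul_assoc]
    rw [this, fsum, div_mul_cancel₀]
    exact ne_of_gt fs
  have hexp : ∀ n : ℕ, Real.exp (Real.log l * n) = l ^ n := by
    intro n
    rw [mul_comm, Real.exp_nat_mul, Real.exp_log hl0]
  have hexpneg : ∀ n : ℕ, Real.exp (-Real.log l * n) = (l⁻¹) ^ n := by
    intro n
    rw [mul_comm, Real.exp_nat_mul, ← Real.log_inv, Real.exp_log (by positivity)]
  constructor
  · -- lower bound
    have key := key_jensen (fun n => a n * t ^ n)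
      (fun n => mul_nonneg (ha n) (pow_nonneg ht.le n)) (sum0 t ht htR)
      (sum1 t ht htR) (Real.log l) (mf a t) hmt ?_
    · have heq : ∑' n : ℕ, (a n * t ^ n) * Real.exp (Real.log l * n) = fsum a (l * t) := by
        refine tsum_congr fun n => ?_
        rw [hexp n, mul_pow]; ring
      rw [heq] at key
      have : Real.exp (Real.log l * mf a t) ≤ fsum a (l * t) / fsum a t := by
        have key' : fsum a t * Real.exp (Real.log l * mf a t) ≤ fsum a (l * t) := key
        rw [le_div_iff₀ ft]; linarith [key']
      rw [Real.le_log_iff_exp_le (div_pos fs ft), mul_comm]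
      exact this
    · have : (fun n : ℕ => (a n * t ^ n) * Real.exp (Real.log l * n))
          = fun n : ℕ => a n * (l * t) ^ n := by
        funext n; rw [hexp n, mul_pow]; ring
      rw [this]; exact sum0 (l * t) hs hlt
  · -- upper bound
    have key := key_jensen (fun n => a n * (l * t) ^ n)
      (fun n => mul_nonneg (ha n) (pow_nonneg hs.le n)) (sum0 (l * t) hs hlt)
      (sum1 (l * t) hs hlt) (-Real.log l) (mf a (l * t)) hms ?_
    · have heq : ∑' n : ℕ, (a n * (l * t) ^ n) * Real.exp (-Real.log l * n) = fsum a t := by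
        refine tsum_congr fun n => ?_
        rw [hexpneg n, mul_assoc, ← mul_pow]
        congr 2
        field_simp
      rw [heq] at key
      have h5 : fsum a (l * t) / fsum a t ≤ Real.exp (Real.log l * mf a (l * t)) := by
        rw [div_le_iff₀ ft]
        have he : Real.exp (-Real.log l * mf a (l * t))
            = (Real.exp (Real.log l * mf a (l * t)))⁻¹ := by
          rw [← Real.exp_neg]; ring_nf
        rw [he] at key
        have hep := Real.exp_pos (Real.log l * mf a (l * t))
        calc fsum a (l * t)
            = fsum a (l * t) * (Real.exp (Real.log l * mf a (l * t)))⁻¹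
              * Real.exp (Real.log l * mf a (l * t)) := by
              field_simp
          _ ≤ fsum a t * Real.exp (Real.log l * mf a (l * t)) :=
              mul_le_mul_of_nonneg_right key hep.le
          _ = Real.exp (Real.log l * mf a (l * t)) * fsum a t := by ring
      rw [Real.log_le_iff_le_exp (div_pos fs ft), mul_comm (mf a (l * t))]
      exact h5
    · have : (fun n : ℕ => (a n * (l * t) ^ n) * Real.exp (-Real.log l * n))
          = fun n : ℕ => a n * t ^ n := by
        funext n; rw [hexpneg n, mul_assoc, ← mul_pow]
        congr 2
        field_simp
      rw [this]; exact sum0 t ht htR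
end
end

section
/- Let f be a power series in the class K with radius of convergence R and Khinchin family (X_t), and assume M_f = lim_{t↑R} m_f(t) = +∞. Then for every integer k ≥ 1, lim_{t↑R} E(X_t^{(k)})/E(X_t^k) = 1, where E(X_t^{(k)}) denotes the k-th factorial moment. -/
open Filter MeasureTheory Topology Real
open scoped ENNReal

noncomputable section

/-- The `k`-th factorial moment `E(X_t^{(k)}) = (Σ n(n−1)···(n−k+1) aₙ tⁿ)/f(t)`. -/
def factMoment (a : ℕ → ℝ) (k : ℕ) (t : ℝ) : ℝ :=
  (∑' n : ℕ, (Nat.descFactorial n k : ℝ) * a n * t ^ n) / fsum a t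


/-! ### Auxiliary lemmas -/

lemma descFactorial_cast_succ (n k : ℕ) :
    ((Nat.descFactorial n (k+1) : ℝ)) = (Nat.descFactorial n k : ℝ) * ((n:ℝ) - k) := by
  rcases le_or_gt k n with h | h
  · rw [Nat.descFactorial_succ, Nat.cast_mul, Nat.cast_sub h]; ring
  · rw [Nat.descFactorial_eq_zero_iff_lt.mpr h,
      Nat.descFactorial_eq_zero_iff_lt.mpr (h.trans (Nat.lt_succ_self k))]
    simp

lemma desc_cast_le_pow (n k : ℕ) : (Nat.descFactorial n k : ℝ) ≤ (n:ℝ)^k := by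
  calc (Nat.descFactorial n k : ℝ) ≤ ((n^k : ℕ) : ℝ) := by
        exact_mod_cast Nat.descFactorial_le_pow n k
    _ = (n:ℝ)^k := by push_cast; ring

lemma pow_le_desc_add (k : ℕ) (hk : 1 ≤ k) (n : ℕ) :
    (n:ℝ)^k ≤ (Nat.descFactorial n k : ℝ) + (k:ℝ)^2 * (n:ℝ)^(k-1) := by
  induction k, hk using Nat.le_induction with
  | base =>
    simp only [pow_one, Nat.descFactorial_one, Nat.cast_one, one_pow, pow_zero, mul_one]
    norm_num
  | succ k hk ih =>
    have hd : (Nat.descFactorial n k : ℝ) ≤ (n:ℝ)^k := desc_cast_le_pow n k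
    have hpow : (n:ℝ) * (n:ℝ)^(k-1) = (n:ℝ)^k := by
      rw [← pow_succ']
      congr 1
      omega
    have hn : (0:ℝ) ≤ (n:ℝ) := Nat.cast_nonneg n
    have h1 : (n:ℝ)^(k+1) = (n:ℝ) * (n:ℝ)^k := by ring
    have h2 : (Nat.descFactorial n (k+1) : ℝ) = (Nat.descFactorial n k : ℝ) * ((n:ℝ) - k) :=
      descFactorial_cast_succ n k
    have hdnn : (0:ℝ) ≤ (Nat.descFactorial n k : ℝ) := Nat.cast_nonneg _
    have hk' : (1:ℝ) ≤ (k:ℝ) := by exact_mod_cast hk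
    have step : (n:ℝ) * (n:ℝ)^k ≤ (n:ℝ) * ((Nat.descFactorial n k : ℝ) + (k:ℝ)^2 * (n:ℝ)^(k-1)) :=
      mul_le_mul_of_nonneg_left ih hn
    have heq : (n:ℝ) * ((Nat.descFactorial n k : ℝ) + (k:ℝ)^2 * (n:ℝ)^(k-1))
        = (Nat.descFactorial n (k+1) : ℝ) + (k:ℝ) * (Nat.descFactorial n k : ℝ)
          + (k:ℝ)^2 * (n:ℝ)^k := by
      rw [h2]
      nlinarith [hpow]
    have hkd : (k:ℝ) * (Nat.descFactorial n k : ℝ) ≤ (k:ℝ) * (n:ℝ)^k :=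
      mul_le_mul_of_nonneg_left hd (by linarith)
    have hfinal : (n:ℝ)^(k+1) ≤ (Nat.descFactorial n (k+1) : ℝ) + ((k:ℝ)^2 + k) * (n:ℝ)^k := by
      rw [h1]
      calc _ ≤ _ := step
        _ = _ := heq
        _ ≤ _ := by linarith
    have hsimp : (k+1) - 1 = k := by omega
    rw [hsimp]
    have hknn : (0:ℝ) ≤ (n:ℝ)^k := by positivity
    push_cast
    nlinarith [hknn]

/-! ### Pointwise bounds -/

lemma ratio_bounds (a : ℕ → ℝ) (ha : ∀ n, 0 ≤ a n) (ha0 : 0 < a 0)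
    (n₀ : ℕ) (hn₀1 : 1 ≤ n₀) (hn₀ : 0 < a n₀) (t : ℝ) (ht : 0 < t)
    (hs : ∀ β : ℝ, Summable (fun n : ℕ => (n:ℝ)^β * a n * t^n)) (k : ℕ) (hk : 1 ≤ k) :
    0 ≤ (∑' n:ℕ, (n:ℝ)^(k-1) * a n * t^n) / (∑' n:ℕ, (n:ℝ)^k * a n * t^n) ∧
    factMoment a k t / moment a (k:ℝ) t ≤ 1 ∧
    1 - (k:ℝ)^2 * ((∑' n:ℕ, (n:ℝ)^(k-1) * a n * t^n) / (∑' n:ℕ, (n:ℝ)^k * a n * t^n))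
      ≤ factMoment a k t / moment a (k:ℝ) t := by
  have hsN : ∀ j : ℕ, Summable (fun n : ℕ => (n:ℝ)^j * a n * t^n) := fun j => by
    simpa [Real.rpow_natCast] using hs j
  have hnn : ∀ (j : ℕ) (n : ℕ), 0 ≤ (n:ℝ)^j * a n * t^n := fun j n =>
    mul_nonneg (mul_nonneg (by positivity) (ha n)) (by positivity)
  have hnnd : ∀ n : ℕ, 0 ≤ (Nat.descFactorial n k : ℝ) * a n * t^n := fun n =>
    mul_nonneg (mul_nonneg (by positivity) (ha n)) (by positivity)
  have hs0 : Summable (fun n : ℕ => a n * t^n) := by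
    simpa using hs 0
  have hfpos : 0 < fsum a t := by
    have h := Summable.le_tsum hs0 0 (fun j _ => mul_nonneg (ha j) (by positivity))
    have h0 : (0:ℝ) < a 0 * t^0 := by simpa using ha0
    exact lt_of_lt_of_le h0 h
  have hn₀pos : (0:ℝ) < (n₀:ℝ) := by exact_mod_cast hn₀1
  have hSkpos : 0 < ∑' n:ℕ, (n:ℝ)^k * a n * t^n := by
    have h := Summable.le_tsum (hsN k) n₀ (fun j _ => hnn k j)
    exact lt_of_lt_of_le (mul_pos (mul_pos (pow_pos hn₀pos k) hn₀) (pow_pos ht n₀)) h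
  have hdesc : Summable (fun n : ℕ => (Nat.descFactorial n k : ℝ) * a n * t^n) := by
    apply Summable.of_nonneg_of_le (fun n => hnnd n) _ (hsN k)
    intro n
    exact mul_le_mul_of_nonneg_right
      (mul_le_mul_of_nonneg_right (desc_cast_le_pow n k) (ha n)) (by positivity)
  have hD_le : (∑' n:ℕ, (Nat.descFactorial n k : ℝ) * a n * t^n)
      ≤ ∑' n:ℕ, (n:ℝ)^k * a n * t^n := by
    apply Summable.tsum_le_tsum _ hdesc (hsN k)
    intro n
    exact mul_le_mul_of_nonneg_right
      (mul_le_mul_of_nonneg_right (desc_cast_le_pow n k) (ha n)) (by positivity)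
  have hSk_le : (∑' n:ℕ, (n:ℝ)^k * a n * t^n)
      ≤ (∑' n:ℕ, (Nat.descFactorial n k : ℝ) * a n * t^n)
        + (k:ℝ)^2 * (∑' n:ℕ, (n:ℝ)^(k-1) * a n * t^n) := by
    have hsum2 : Summable (fun n : ℕ => (Nat.descFactorial n k : ℝ) * a n * t^n
        + (k:ℝ)^2 * ((n:ℝ)^(k-1) * a n * t^n)) :=
      hdesc.add ((hsN (k-1)).mul_left _)
    have h := Summable.tsum_le_tsum (f := fun n : ℕ => (n:ℝ)^k * a n * t^n)
      (g := fun n : ℕ => (Nat.descFactorial n k : ℝ) * a n * t^n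
        + (k:ℝ)^2 * ((n:ℝ)^(k-1) * a n * t^n)) ?_ (hsN k) hsum2
    · rw [Summable.tsum_add hdesc ((hsN (k-1)).mul_left _), tsum_mul_left] at h
      exact h
    · intro n
      have h := mul_le_mul_of_nonneg_right (pow_le_desc_add k hk n)
        (mul_nonneg (ha n) (pow_nonneg ht.le n))
      nlinarith [h]
  have hmom : moment a (k:ℝ) t = (∑' n:ℕ, (n:ℝ)^k * a n * t^n) / fsum a t := by
    unfold moment
    congr 1
    exact tsum_congr fun n => by rw [Real.rpow_natCast]
  have hratio_eq : factMoment a k t / moment a (k:ℝ) t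
      = (∑' n:ℕ, (Nat.descFactorial n k : ℝ) * a n * t^n)
        / (∑' n:ℕ, (n:ℝ)^k * a n * t^n) := by
    unfold factMoment
    rw [hmom]
    rw [div_div_div_comm, div_self hfpos.ne', div_one]
  refine ⟨div_nonneg (tsum_nonneg fun n => hnn (k-1) n) hSkpos.le, ?_, ?_⟩
  · rw [hratio_eq]
    exact (div_le_one hSkpos).mpr hD_le
  · rw [hratio_eq]
    have heq : 1 - (k:ℝ)^2 * ((∑' n:ℕ, (n:ℝ)^(k-1) * a n * t^n) / (∑' n:ℕ, (n:ℝ)^k * a n * t^n))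
        = ((∑' n:ℕ, (n:ℝ)^k * a n * t^n)
            - (k:ℝ)^2 * (∑' n:ℕ, (n:ℝ)^(k-1) * a n * t^n)) / (∑' n:ℕ, (n:ℝ)^k * a n * t^n) := by
      field_simp
    rw [heq]
    exact (div_le_div_iff_of_pos_right hSkpos).mpr (by linarith [hSk_le])

lemma ratio_le (a : ℕ → ℝ) (ha : ∀ n, 0 ≤ a n) (ha0 : 0 < a 0)
    (n₀ : ℕ) (hn₀1 : 1 ≤ n₀) (hn₀ : 0 < a n₀) (t : ℝ) (ht : 0 < t)
    (hs : ∀ β : ℝ, Summable (fun n : ℕ => (n:ℝ)^β * a n * t^n)) (k : ℕ) (hk : 1 ≤ k)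
    (N : ℕ) (hN : 1 ≤ N) :
    0 < mf a t ∧
    (∑' n:ℕ, (n:ℝ)^(k-1) * a n * t^n) / (∑' n:ℕ, (n:ℝ)^k * a n * t^n)
      ≤ (N:ℝ)^(k-1) / mf a t + 1/(N:ℝ) := by
  have hsN : ∀ j : ℕ, Summable (fun n : ℕ => (n:ℝ)^j * a n * t^n) := fun j => by
    simpa [Real.rpow_natCast] using hs j
  have hnn : ∀ (j : ℕ) (n : ℕ), 0 ≤ (n:ℝ)^j * a n * t^n := fun j n =>
    mul_nonneg (mul_nonneg (by positivity) (ha n)) (by positivity)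
  have hs0 : Summable (fun n : ℕ => a n * t^n) := by
    simpa using hs 0
  have hs1 : Summable (fun n : ℕ => (n:ℝ) * a n * t^n) := by
    simpa [Real.rpow_one] using hs 1
  have hfpos : 0 < fsum a t := by
    have h := Summable.le_tsum hs0 0 (fun j _ => mul_nonneg (ha j) (by positivity))
    have h0 : (0:ℝ) < a 0 * t^0 := by simpa using ha0
    exact lt_of_lt_of_le h0 h
  have hn₀pos : (0:ℝ) < (n₀:ℝ) := by exact_mod_cast hn₀1
  have hSkpos : 0 < ∑' n:ℕ, (n:ℝ)^k * a n * t^n := by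
    have h := Summable.le_tsum (hsN k) n₀ (fun j _ => hnn k j)
    exact lt_of_lt_of_le (mul_pos (mul_pos (pow_pos hn₀pos k) hn₀) (pow_pos ht n₀)) h
  have hS1pos : 0 < ∑' n:ℕ, (n:ℝ) * a n * t^n := by
    have h := Summable.le_tsum hs1 n₀ (fun j _ =>
      mul_nonneg (mul_nonneg (Nat.cast_nonneg j) (ha j)) (by positivity))
    exact lt_of_lt_of_le (mul_pos (mul_pos hn₀pos hn₀) (pow_pos ht n₀)) h
  have hmf : mf a t = (∑' n:ℕ, (n:ℝ) * a n * t^n) / fsum a t := by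
    unfold mf moment
    congr 1
    exact tsum_congr fun n => by rw [Real.rpow_one]
  have hmfpos : 0 < mf a t := by rw [hmf]; exact div_pos hS1pos hfpos
  refine ⟨hmfpos, ?_⟩
  have hNpos : (0:ℝ) < (N:ℝ) := by exact_mod_cast hN
  -- S₁ ≤ S_k
  have hS1_le : (∑' n:ℕ, (n:ℝ) * a n * t^n) ≤ ∑' n:ℕ, (n:ℝ)^k * a n * t^n := by
    apply Summable.tsum_le_tsum _ hs1 (hsN k)
    intro n
    have : (n:ℝ) ≤ (n:ℝ)^k := by
      rcases Nat.eq_zero_or_pos n with h | h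
      · subst h; simp [zero_pow (by omega : k ≠ 0)]
      · exact le_self_pow₀ (by exact_mod_cast h) (by omega)
    exact mul_le_mul_of_nonneg_right (mul_le_mul_of_nonneg_right this (ha n)) (by positivity)
  -- split: S_{k-1} ≤ N^{k-1} f + (1/N) S_k
  have hsplit : (∑' n:ℕ, (n:ℝ)^(k-1) * a n * t^n)
      ≤ (N:ℝ)^(k-1) * fsum a t + (1/(N:ℝ)) * (∑' n:ℕ, (n:ℝ)^k * a n * t^n) := by
    have hsum2 : Summable (fun n : ℕ => (N:ℝ)^(k-1) * (a n * t^n)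
        + (1/(N:ℝ)) * ((n:ℝ)^k * a n * t^n)) :=
      (hs0.mul_left _).add ((hsN k).mul_left _)
    have h := Summable.tsum_le_tsum (f := fun n : ℕ => (n:ℝ)^(k-1) * a n * t^n)
      (g := fun n : ℕ => (N:ℝ)^(k-1) * (a n * t^n) + (1/(N:ℝ)) * ((n:ℝ)^k * a n * t^n))
      ?_ (hsN (k-1)) hsum2
    · rw [Summable.tsum_add (hs0.mul_left _) ((hsN k).mul_left _), tsum_mul_left, tsum_mul_left] at h
      exact h
    · intro n
      have hc : (0:ℝ) ≤ a n * t^n := mul_nonneg (ha n) (by positivity)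
      rcases le_or_gt n N with hnN | hnN
      · have h1 : (n:ℝ)^(k-1) ≤ (N:ℝ)^(k-1) :=
          pow_le_pow_left₀ (Nat.cast_nonneg n) (by exact_mod_cast hnN) _
        have h2 : (0:ℝ) ≤ (1/(N:ℝ)) * ((n:ℝ)^k * a n * t^n) := by
          apply mul_nonneg (by positivity) (hnn k n)
        nlinarith [mul_le_mul_of_nonneg_right h1 hc]
      · have hNn : (N:ℝ) ≤ (n:ℝ) := by exact_mod_cast hnN.le
        have hpow : (n:ℝ) * (n:ℝ)^(k-1) = (n:ℝ)^k := by
          rw [← pow_succ']; congr 1; omega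
        have hmul : (N:ℝ) * (n:ℝ)^(k-1) ≤ (n:ℝ)^k := by
          calc (N:ℝ) * (n:ℝ)^(k-1) ≤ (n:ℝ) * (n:ℝ)^(k-1) :=
                mul_le_mul_of_nonneg_right hNn (by positivity)
            _ = (n:ℝ)^k := hpow
        have key : (n:ℝ)^(k-1) * (a n * t^n) ≤ (1/(N:ℝ)) * ((n:ℝ)^k * (a n * t^n)) := by
          rw [one_div, ← div_eq_inv_mul, le_div_iff₀ hNpos]
          nlinarith [mul_le_mul_of_nonneg_right hmul hc]
        have h2 : (0:ℝ) ≤ (N:ℝ)^(k-1) * (a n * t^n) := by positivity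
        nlinarith [key, h2]
  -- divide by S_k
  have hdiv := (div_le_div_iff_of_pos_right hSkpos).mpr hsplit
  have heq : ((N:ℝ)^(k-1) * fsum a t + (1/(N:ℝ)) * (∑' n:ℕ, (n:ℝ)^k * a n * t^n))
      / (∑' n:ℕ, (n:ℝ)^k * a n * t^n)
      = (N:ℝ)^(k-1) * (fsum a t / (∑' n:ℕ, (n:ℝ)^k * a n * t^n)) + 1/(N:ℝ) := by
    field_simp
  rw [heq] at hdiv
  have hfS : fsum a t / (∑' n:ℕ, (n:ℝ)^k * a n * t^n) ≤ 1 / mf a t := by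
    rw [hmf, one_div_div]
    exact div_le_div_of_nonneg_left hfpos.le hS1pos hS1_le
  calc (∑' n:ℕ, (n:ℝ)^(k-1) * a n * t^n) / (∑' n:ℕ, (n:ℝ)^k * a n * t^n)
      ≤ (N:ℝ)^(k-1) * (fsum a t / (∑' n:ℕ, (n:ℝ)^k * a n * t^n)) + 1/(N:ℝ) := hdiv
    _ ≤ (N:ℝ)^(k-1) * (1 / mf a t) + 1/(N:ℝ) := by
        have := mul_le_mul_of_nonneg_left hfS (by positivity : (0:ℝ) ≤ (N:ℝ)^(k-1))
        linarith
    _ = (N:ℝ)^(k-1) / mf a t + 1/(N:ℝ) := by rw [mul_one_div]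

/-- if `M_f = +∞` then for every integer `k ≥ 1`,
`lim_{t↑R} E(X_t^{(k)})/E(X_t^k) = 1`. -/
theorem factMoment_ratio_tendsto_one (a : ℕ → ℝ) (R : ℝ≥0∞) (hR : 0 < R)
    (hK : IsKClass a R) (hM : Tendsto (mf a) (nhdsLT R) atTop) :
    ∀ k : ℕ, 1 ≤ k →
      Tendsto (fun t => factMoment a k t / moment a (k : ℝ) t) (nhdsLT R) (𝓝 1) := by
  obtain ⟨ha, ha0, ⟨n₀, hn₀1, hn₀⟩, hsum, -⟩ := hK
  intro k hk
  -- eventually t is "good": positive, below R, with all summability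
  have hgood : ∀ᶠ t in nhdsLT R,
      0 < t ∧ ∀ β : ℝ, Summable (fun n : ℕ => (n:ℝ)^β * a n * t^n) := by
    unfold _root_.nhdsLT
    split_ifs with hRtop
    · filter_upwards [eventually_gt_atTop (0:ℝ)] with t ht
      exact ⟨ht, fun β => hsum β t ht (by simp [hRtop])⟩
    · have hRpos : 0 < R.toReal := ENNReal.toReal_pos hR.ne' hRtop
      have hmem : Set.Ioo (0:ℝ) R.toReal ∈ nhdsWithin R.toReal (Set.Iio R.toReal) :=
        Ioo_mem_nhdsLT_of_mem ⟨hRpos, le_refl _⟩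
      filter_upwards [hmem] with t ht
      refine ⟨ht.1, fun β => hsum β t ht.1 ?_⟩
      exact (ENNReal.ofReal_lt_iff_lt_toReal ht.1.le hRtop).mpr ht.2
  set r : ℝ → ℝ := fun t =>
    (∑' n:ℕ, (n:ℝ)^(k-1) * a n * t^n) / (∑' n:ℕ, (n:ℝ)^k * a n * t^n) with hrdef
  -- Step A : r → 0
  have hr0 : Tendsto r (nhdsLT R) (𝓝 0) := by
    rw [NormedAddCommGroup.tendsto_nhds_zero]
    intro ε hε
    obtain ⟨N, hNgt⟩ := exists_nat_gt (2/ε)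
    have hNR : (0:ℝ) < N := lt_of_le_of_lt (by positivity) hNgt
    have hN1 : 1 ≤ N := by exact_mod_cast Nat.one_le_iff_ne_zero.mpr (by exact_mod_cast hNR.ne')
    have hNε : 1/(N:ℝ) < ε/2 := by
      rw [div_lt_div_iff₀ hNR (by norm_num : (0:ℝ) < 2)]
      have := (div_lt_iff₀ hε).mp hNgt
      linarith
    have hmf_big : ∀ᶠ t in nhdsLT R, 2*(N:ℝ)^(k-1)/ε < mf a t :=
      hM.eventually (eventually_gt_atTop _)
    filter_upwards [hgood, hmf_big] with t htg hbig
    obtain ⟨ht, hs⟩ := htg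
    obtain ⟨hmfpos, hle⟩ := ratio_le a ha ha0 n₀ hn₀1 hn₀ t ht hs k hk N hN1
    have hr_nonneg := (ratio_bounds a ha ha0 n₀ hn₀1 hn₀ t ht hs k hk).1
    rw [Real.norm_eq_abs, abs_of_nonneg hr_nonneg]
    have hNk : (0:ℝ) < (N:ℝ)^(k-1) := by positivity
    have hhalf : (N:ℝ)^(k-1) / mf a t < ε/2 := by
      rw [div_lt_div_iff₀ hmfpos (by norm_num : (0:ℝ) < 2)]
      have h2 : 2*(N:ℝ)^(k-1) < ε * mf a t := by
        have := (div_lt_iff₀ hε).mp hbig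
        linarith
      linarith
    calc r t ≤ (N:ℝ)^(k-1) / mf a t + 1/(N:ℝ) := hle
      _ < ε/2 + ε/2 := by linarith
      _ = ε := by ring
  -- Step B : squeeze
  have hub : ∀ᶠ t in nhdsLT R, factMoment a k t / moment a (k:ℝ) t ≤ 1 := by
    filter_upwards [hgood] with t ⟨ht, hs⟩
    exact (ratio_bounds a ha ha0 n₀ hn₀1 hn₀ t ht hs k hk).2.1
  have hlb : ∀ᶠ t in nhdsLT R,
      1 - (k:ℝ)^2 * r t ≤ factMoment a k t / moment a (k:ℝ) t := by
    filter_upwards [hgood] with t ⟨ht, hs⟩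
    exact (ratio_bounds a ha ha0 n₀ hn₀1 hn₀ t ht hs k hk).2.2
  have hlow : Tendsto (fun t => 1 - (k:ℝ)^2 * r t) (nhdsLT R) (𝓝 1) := by
    have h : Tendsto (fun t => (1:ℝ) - (k:ℝ)^2 * r t) (nhdsLT R) (𝓝 (1 - (k:ℝ)^2 * 0)) :=
      Tendsto.sub tendsto_const_nhds (hr0.const_mul _)
    simpa using h
  exact tendsto_of_tendsto_of_tendsto_of_le_of_le' hlow tendsto_const_nhds hlb hub
end
end

section
/- (Boĭchuk–Gol'dberg) Let f be an entire power series in the class K (radius of convergence R = ∞). Then sup_{t>0} σ_f²(t) ≥ gap(f)²/4; in particular sup_{t>0} σ_f²(t) ≥ 1/4. -/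
open Filter MeasureTheory Topology Real
open scoped ENNReal

noncomputable section

/-- `m` and `n` are consecutive indices of nonzero coefficients of `f`. -/
def ConsecPair (a : ℕ → ℝ) (m n : ℕ) : Prop :=
  a m ≠ 0 ∧ a n ≠ 0 ∧ m < n ∧ ∀ j, m < j → j < n → a j = 0

/-- `gap(f) = sup_k (n_{k+1} − n_k)`, as an extended nonnegative real. -/
def gapENN (a : ℕ → ℝ) : ℝ≥0∞ :=
  ⨆ (m : ℕ) (n : ℕ) (_ : ConsecPair a m n), ((n - m : ℕ) : ℝ≥0∞)

namespace BG

variable {a : ℕ → ℝ} {t : ℝ}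

lemma summable_k (hK : IsKClass a ⊤) (k : ℕ) (ht : 0 < t) :
    Summable (fun n : ℕ => (n : ℝ) ^ k * a n * t ^ n) := by
  have h := hK.2.2.2.1 (k : ℝ) t ht (by simp)
  simpa [Real.rpow_natCast] using h

lemma summable0 (hK : IsKClass a ⊤) (ht : 0 < t) : Summable (fun n : ℕ => a n * t ^ n) := by
  simpa using summable_k hK 0 ht

lemma summable1 (hK : IsKClass a ⊤) (ht : 0 < t) :
    Summable (fun n : ℕ => (n : ℝ) * a n * t ^ n) := by
  simpa using summable_k hK 1 ht

lemma summable2 (hK : IsKClass a ⊤) (ht : 0 < t) :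
    Summable (fun n : ℕ => (n : ℝ) ^ 2 * a n * t ^ n) := summable_k hK 2 ht

lemma fsum_pos (hK : IsKClass a ⊤) (ht : 0 < t) : 0 < fsum a t := by
  have h0 := summable0 hK ht
  have h : a 0 * t ^ 0 ≤ fsum a t :=
    Summable.le_tsum h0 0 (fun i _ => mul_nonneg (hK.1 i) (pow_nonneg ht.le i))
  have := hK.2.1
  simp only [pow_zero, mul_one] at h
  linarith

lemma mf_eq : mf a t = (∑' n : ℕ, (n : ℝ) * a n * t ^ n) / fsum a t := by
  unfold mf moment
  congr 1
  exact tsum_congr fun n => by rw [Real.rpow_one]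

lemma moment2_eq : moment a 2 t = (∑' n : ℕ, (n : ℝ) ^ (2:ℕ) * a n * t ^ n) / fsum a t := by
  unfold moment
  congr 1
  exact tsum_congr fun n => by
    rw [show (2:ℝ) = ((2:ℕ):ℝ) by norm_num, Real.rpow_natCast]

lemma var_at_mean (hK : IsKClass a ⊤) {m n : ℕ} (hp : ConsecPair a m n) (ht : 0 < t)
    (hmean : mf a t = ((m:ℝ) + n) / 2) : ((n:ℝ) - m) ^ 2 / 4 ≤ varf a t := by
  have ha := hK.1
  set c : ℝ := ((m:ℝ) + n) / 2 with hc
  set d : ℝ := ((n:ℝ) - m) / 2 with hd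
  have hS0 := summable0 hK ht
  have hS1 := summable1 hK ht
  have hS2 := summable2 hK ht
  have hF : 0 < fsum a t := fsum_pos hK ht
  have hM : (∑' j : ℕ, (j:ℝ) * a j * t ^ j) = c * fsum a t := by
    have := mf_eq (a := a) (t := t)
    rw [hmean] at this
    field_simp at this
    linarith [this]
  have hmn : (m:ℝ) < n := by exact_mod_cast hp.2.2.1
  have hdnn : 0 ≤ d := by rw [hd]; linarith
  -- pointwise bound
  have hpt : ∀ j : ℕ, d ^ 2 * (a j * t ^ j) ≤ ((j:ℝ) - c) ^ 2 * (a j * t ^ j) := by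
    intro j
    rcases lt_or_ge m j with hmj | hjm
    · rcases lt_or_ge j n with hjn | hnj
      · simp [hp.2.2.2 j hmj hjn]
      · have habs : d ≤ |(j:ℝ) - c| := by
          have h1 : (n:ℝ) ≤ j := by exact_mod_cast hnj
          have h2 : d ≤ (j:ℝ) - c := by rw [hd, hc]; linarith
          exact h2.trans (le_abs_self _)
        have := pow_le_pow_left₀ hdnn habs 2
        rw [sq_abs] at this
        exact mul_le_mul_of_nonneg_right this (mul_nonneg (ha j) (pow_nonneg ht.le j))
    · have habs : d ≤ |(j:ℝ) - c| := by
        have h1 : (j:ℝ) ≤ m := by exact_mod_cast hjm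
        have h2 : d ≤ -((j:ℝ) - c) := by rw [hd, hc]; linarith
        exact h2.trans (neg_le_abs _)
      have := pow_le_pow_left₀ hdnn habs 2
      rw [sq_abs] at this
      exact mul_le_mul_of_nonneg_right this (mul_nonneg (ha j) (pow_nonneg ht.le j))
  -- summability of centered series
  have hSc : Summable (fun j : ℕ => ((j:ℝ) - c) ^ 2 * (a j * t ^ j)) := by
    refine ((hS2.sub (hS1.mul_left (2*c))).add (hS0.mul_left (c^2))).congr fun j => by ring
  have hsum_eq : (∑' j : ℕ, ((j:ℝ) - c) ^ 2 * (a j * t ^ j))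
      = (∑' j : ℕ, (j:ℝ) ^ 2 * a j * t ^ j) - c ^ 2 * fsum a t := by
    have e : ∀ j : ℕ, ((j:ℝ) - c) ^ 2 * (a j * t ^ j)
        = ((j:ℝ) ^ 2 * a j * t ^ j - 2 * c * ((j:ℝ) * a j * t ^ j)) + c ^ 2 * (a j * t ^ j) := by
      intro j; ring
    rw [tsum_congr e, Summable.tsum_add (hS2.sub (hS1.mul_left (2*c))) (hS0.mul_left (c^2)),
      Summable.tsum_sub hS2 (hS1.mul_left (2*c)), tsum_mul_left, tsum_mul_left, hM]
    unfold fsum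
    ring
  have hlow : d ^ 2 * fsum a t ≤ (∑' j : ℕ, ((j:ℝ) - c) ^ 2 * (a j * t ^ j)) := by
    have := Summable.tsum_le_tsum hpt (hS0.mul_left (d^2)) hSc
    rwa [tsum_mul_left] at this
  rw [hsum_eq] at hlow
  have hvar : varf a t = (∑' j : ℕ, (j:ℝ) ^ 2 * a j * t ^ j) / fsum a t - c ^ 2 := by
    unfold varf
    rw [moment2_eq, hmean]
  rw [hvar]
  have : d ^ 2 ≤ ((∑' j : ℕ, (j:ℝ) ^ 2 * a j * t ^ j) - c ^ 2 * fsum a t) / fsum a t :=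
    (le_div_iff₀ hF).2 hlow
  have heq : ((∑' j : ℕ, (j:ℝ) ^ 2 * a j * t ^ j) - c ^ 2 * fsum a t) / fsum a t
      = (∑' j : ℕ, (j:ℝ) ^ 2 * a j * t ^ j) / fsum a t - c ^ 2 := by
    field_simp
  rw [heq] at this
  have hd2 : ((n:ℝ) - m) ^ 2 / 4 = d ^ 2 := by rw [hd]; ring
  linarith

-- small t : mean below c
lemma exists_small (hK : IsKClass a ⊤) {c : ℝ} (hc : 0 < c) :
    ∃ t₁ : ℝ, 0 < t₁ ∧ t₁ ≤ 1 ∧ mf a t₁ ≤ c := by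
  have ha := hK.1
  have ha0 := hK.2.1
  set M1 : ℝ := ∑' j : ℕ, (j:ℝ) * a j * (1:ℝ) ^ j with hM1
  have hM1nn : 0 ≤ M1 := tsum_nonneg fun j =>
    mul_nonneg (mul_nonneg (Nat.cast_nonneg j) (ha j)) (pow_nonneg zero_le_one j)
  set t₁ : ℝ := min 1 (c * a 0 / (M1 + 1)) with ht₁
  have ht₁pos : 0 < t₁ := lt_min one_pos (by positivity)
  have ht₁le1 : t₁ ≤ 1 := min_le_left _ _
  refine ⟨t₁, ht₁pos, ht₁le1, ?_⟩
  have hMle : (∑' j : ℕ, (j:ℝ) * a j * t₁ ^ j) ≤ t₁ * M1 := by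
    have h := Summable.tsum_le_tsum (f := fun j : ℕ => (j:ℝ) * a j * t₁ ^ j)
      (g := fun j : ℕ => t₁ * ((j:ℝ) * a j * (1:ℝ) ^ j)) ?_
      (summable1 hK ht₁pos) ((summable1 hK one_pos).mul_left t₁)
    · rwa [tsum_mul_left] at h
    · intro j
      rcases Nat.eq_zero_or_pos j with rfl | hj
      · simp
      · have hle : t₁ ^ j ≤ t₁ := by
          calc t₁ ^ j ≤ t₁ ^ 1 := pow_le_pow_of_le_one ht₁pos.le ht₁le1 hj
          _ = t₁ := pow_one t₁
        have := mul_le_mul_of_nonneg_left hle (mul_nonneg (Nat.cast_nonneg j) (ha j))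
        calc (j:ℝ) * a j * t₁ ^ j = ((j:ℝ) * a j) * t₁ ^ j := by ring
          _ ≤ ((j:ℝ) * a j) * t₁ := this
          _ = t₁ * ((j:ℝ) * a j * (1:ℝ) ^ j) := by ring
  have hF : 0 < fsum a t₁ := fsum_pos hK ht₁pos
  have haF : a 0 ≤ fsum a t₁ := by
    have h : a 0 * t₁ ^ 0 ≤ fsum a t₁ :=
      Summable.le_tsum (summable0 hK ht₁pos) 0 (fun i _ => mul_nonneg (ha i) (pow_nonneg ht₁pos.le i))
    simpa using h
  rw [mf_eq]
  have hdiv : (∑' j : ℕ, (j:ℝ) * a j * t₁ ^ j) / fsum a t₁ ≤ (t₁ * M1) / a 0 :=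
    div_le_div₀ (mul_nonneg ht₁pos.le hM1nn) hMle ha0 haF
  refine hdiv.trans ?_
  rw [div_le_iff₀ ha0]
  have h1 : t₁ ≤ c * a 0 / (M1 + 1) := min_le_right _ _
  have h2 : t₁ * (M1 + 1) ≤ c * a 0 := (le_div_iff₀ (by linarith)).1 h1
  nlinarith

-- large t : mean above c
lemma exists_large (hK : IsKClass a ⊤) {m n : ℕ} (hp : ConsecPair a m n) :
    ∃ t₂ : ℝ, 1 ≤ t₂ ∧ ((m:ℝ) + n) / 2 ≤ mf a t₂ := by
  have ha := hK.1
  have hmn0 : m < n := hp.2.2.1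
  have hmn : (m:ℝ) < n := by exact_mod_cast hmn0
  set c : ℝ := ((m:ℝ) + n) / 2 with hc
  set d : ℝ := ((n:ℝ) - m) / 2 with hd
  have hdpos : 0 < d := by rw [hd]; linarith
  have hcpos : 0 < c := by
    rw [hc]
    have : (0:ℝ) ≤ m := Nat.cast_nonneg m
    linarith
  have han : 0 < a n := (ha n).lt_of_ne (Ne.symm hp.2.1)
  set A : ℝ := ∑ j ∈ Finset.range n, a j with hA
  have hAnn : 0 ≤ A := Finset.sum_nonneg fun j _ => ha j
  set t : ℝ := max 1 (c * A / (d * a n) + 1) with htdef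
  have ht1 : 1 ≤ t := le_max_left _ _
  have htpos : 0 < t := lt_of_lt_of_le one_pos ht1
  refine ⟨t, ht1, ?_⟩
  have hS0 := summable0 hK htpos
  have hS1 := summable1 hK htpos
  have hSc : Summable (fun j : ℕ => ((j:ℝ) - c) * (a j * t ^ j)) :=
    (hS1.sub (hS0.mul_left c)).congr fun j => by ring
  have hsplit : (∑' j : ℕ, ((j:ℝ) - c) * (a j * t ^ j))
      = (∑' j : ℕ, (j:ℝ) * a j * t ^ j) - c * fsum a t := by
    have e : ∀ j : ℕ, ((j:ℝ) - c) * (a j * t ^ j)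
        = (j:ℝ) * a j * t ^ j - c * (a j * t ^ j) := by intro j; ring
    rw [tsum_congr e, Summable.tsum_sub hS1 (hS0.mul_left c), tsum_mul_left]
    rfl
  have hkey : 0 ≤ ∑' j : ℕ, ((j:ℝ) - c) * (a j * t ^ j) := by
    rw [← Summable.sum_add_tsum_nat_add (f := fun j : ℕ => ((j:ℝ) - c) * (a j * t ^ j)) n hSc]
    have htail : d * (a n * t ^ n) ≤ ∑' k : ℕ, (((k + n : ℕ):ℝ) - c) * (a (k + n) * t ^ (k + n)) := by
      have hS' : Summable (fun k : ℕ => (((k + n : ℕ):ℝ) - c) * (a (k + n) * t ^ (k + n))) :=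
        (summable_nat_add_iff n).2 hSc
      have h0 : (((0 + n : ℕ):ℝ) - c) * (a (0 + n) * t ^ (0 + n)) = d * (a n * t ^ n) := by
        simp only [Nat.zero_add]
        rw [hd, hc]; ring
      have := Summable.le_tsum hS' 0 (fun k _ => by
        have hkn : c ≤ ((k + n : ℕ):ℝ) := by
          push_cast
          rw [hc]
          have : (0:ℝ) ≤ k := Nat.cast_nonneg k
          linarith
        exact mul_nonneg (by linarith) (mul_nonneg (ha _) (pow_nonneg htpos.le _)))
      rw [h0] at this
      exact this
    have hhead : -(c * t ^ m * A) ≤ ∑ j ∈ Finset.range n, ((j:ℝ) - c) * (a j * t ^ j) := by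
      have hsum : ∑ j ∈ Finset.range n, (-(c * t ^ m * a j)) ≤
          ∑ j ∈ Finset.range n, ((j:ℝ) - c) * (a j * t ^ j) := by
        refine Finset.sum_le_sum fun j hj => ?_
        rcases eq_or_ne (a j) 0 with hz | hz
        · simp [hz]
        · have hjm : j ≤ m := by
            by_contra hcon
            exact hz (hp.2.2.2 j (lt_of_not_ge hcon) (Finset.mem_range.1 hj))
          have hx : 0 ≤ a j * t ^ j := mul_nonneg (ha j) (pow_nonneg htpos.le j)
          have hy : a j * t ^ j ≤ a j * t ^ m :=
            mul_le_mul_of_nonneg_left (pow_le_pow_right₀ ht1 hjm) (ha j)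
          have hcj : -c ≤ (j:ℝ) - c := by
            have : (0:ℝ) ≤ j := Nat.cast_nonneg j
            linarith
          have h1 : -c * (a j * t ^ j) ≤ ((j:ℝ) - c) * (a j * t ^ j) :=
            mul_le_mul_of_nonneg_right hcj hx
          have h2 : c * (a j * t ^ j) ≤ c * (a j * t ^ m) :=
            mul_le_mul_of_nonneg_left hy hcpos.le
          nlinarith
      calc -(c * t ^ m * A) = ∑ j ∈ Finset.range n, (-(c * t ^ m * a j)) := by
            rw [hA, Finset.mul_sum, ← Finset.sum_neg_distrib]
        _ ≤ _ := hsum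
    have hbal : c * t ^ m * A ≤ d * (a n * t ^ n) := by
      have hge : c * A / (d * a n) ≤ t ^ (n - m) := by
        calc c * A / (d * a n) ≤ c * A / (d * a n) + 1 := by linarith
          _ ≤ t := le_max_right _ _
          _ = t ^ 1 := (pow_one t).symm
          _ ≤ t ^ (n - m) := pow_le_pow_right₀ ht1 (by omega)
      have h3 : c * A ≤ d * a n * t ^ (n - m) := by
        rw [div_le_iff₀ (by positivity)] at hge
        linarith
      have h4 : t ^ n = t ^ m * t ^ (n - m) := by
        rw [← pow_add]
        congr 1
        omega
      calc c * t ^ m * A = t ^ m * (c * A) := by ring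
        _ ≤ t ^ m * (d * a n * t ^ (n - m)) :=
            mul_le_mul_of_nonneg_left h3 (pow_nonneg htpos.le m)
        _ = d * (a n * t ^ n) := by rw [h4]; ring
    linarith
  rw [hsplit] at hkey
  rw [mf_eq, le_div_iff₀ (fsum_pos hK htpos)]
  linarith

lemma mf_continuousOn (hK : IsKClass a ⊤) {t₁ t₂ : ℝ} (h1 : 0 < t₁) (h12 : t₁ ≤ t₂) :
    ContinuousOn (fun x => mf a x) (Set.Icc t₁ t₂) := by
  have ha := hK.1
  have h2 : 0 < t₂ := lt_of_lt_of_le h1 h12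
  have habs : ∀ x ∈ Set.Icc t₁ t₂, ∀ j : ℕ, |x ^ j| ≤ t₂ ^ j := by
    intro x hx j
    rw [abs_pow]
    exact pow_le_pow_left₀ (abs_nonneg x) (abs_le.2 ⟨by linarith [hx.1], hx.2⟩) j
  have hFc : ContinuousOn (fun x => fsum a x) (Set.Icc t₁ t₂) := by
    refine continuousOn_tsum (f := fun (j : ℕ) (x : ℝ) => a j * x ^ j)
      (fun j => (continuous_const.mul (continuous_pow j)).continuousOn)
      (summable0 hK h2) (fun j x hx => ?_)
    rw [Real.norm_eq_abs, abs_mul, abs_of_nonneg (ha j)]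
    exact mul_le_mul_of_nonneg_left (habs x hx j) (ha j)
  have hMc : ContinuousOn (fun x => ∑' j : ℕ, (j:ℝ) * a j * x ^ j) (Set.Icc t₁ t₂) := by
    refine continuousOn_tsum (f := fun (j : ℕ) (x : ℝ) => (j:ℝ) * a j * x ^ j)
      (fun j => (continuous_const.mul (continuous_pow j)).continuousOn)
      (summable1 hK h2) (fun j x hx => ?_)
    rw [Real.norm_eq_abs, abs_mul, abs_of_nonneg (mul_nonneg (Nat.cast_nonneg j) (ha j))]
    exact mul_le_mul_of_nonneg_left (habs x hx j) (mul_nonneg (Nat.cast_nonneg j) (ha j))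
  have hq : ContinuousOn (fun x => (∑' j : ℕ, (j:ℝ) * a j * x ^ j) / fsum a x)
      (Set.Icc t₁ t₂) :=
    hMc.div hFc fun x hx => (fsum_pos hK (lt_of_lt_of_le h1 hx.1)).ne'
  exact hq.congr fun x _ => mf_eq

lemma exists_mean (hK : IsKClass a ⊤) {m n : ℕ} (hp : ConsecPair a m n) :
    ∃ t : ℝ, 0 < t ∧ mf a t = ((m:ℝ) + n) / 2 := by
  have hcpos : 0 < ((m:ℝ) + n) / 2 := by
    have h1 : (0:ℝ) ≤ m := Nat.cast_nonneg m
    have hn : 1 ≤ n := lt_of_le_of_lt (Nat.zero_le m) hp.2.2.1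
    have h2 : (1:ℝ) ≤ n := Nat.one_le_cast.2 hn
    linarith
  obtain ⟨t₁, ht₁, ht₁1, hm1⟩ := exists_small hK hcpos
  obtain ⟨t₂, ht₂1, hm2⟩ := exists_large hK hp
  have h12 : t₁ ≤ t₂ := ht₁1.trans ht₂1
  have hsub := intermediate_value_Icc h12 (mf_continuousOn hK ht₁ h12)
  have hmem : ((m:ℝ) + n) / 2 ∈ Set.Icc (mf a t₁) (mf a t₂) := ⟨hm1, hm2⟩
  obtain ⟨t, ht, hteq⟩ := hsub hmem
  exact ⟨t, lt_of_lt_of_le ht₁ ht.1, hteq⟩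

lemma pair_le (hK : IsKClass a ⊤) {m n : ℕ} (hp : ConsecPair a m n) :
    ENNReal.ofReal (((n:ℝ) - m) ^ 2 / 4)
      ≤ ⨆ t ∈ Set.Ioi (0:ℝ), ENNReal.ofReal (varf a t) := by
  obtain ⟨t, ht, hteq⟩ := exists_mean hK hp
  calc ENNReal.ofReal (((n:ℝ) - m) ^ 2 / 4) ≤ ENNReal.ofReal (varf a t) :=
        ENNReal.ofReal_le_ofReal (var_at_mean hK hp ht hteq)
    _ ≤ _ := le_biSup (fun u => ENNReal.ofReal (varf a u)) (Set.mem_Ioi.2 ht)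

lemma sq_iSup_le {ι : Sort*} (f : ι → ℝ≥0∞) : (⨆ i, f i) ^ 2 ≤ ⨆ i, (f i) ^ 2 := by
  rw [pow_two, ENNReal.iSup_mul]
  refine iSup_le fun i => ?_
  rw [ENNReal.mul_iSup]
  refine iSup_le fun j => ?_
  rcases le_total (f i) (f j) with h | h
  · calc f i * f j ≤ f j * f j := mul_le_mul_left h _
      _ = (f j) ^ 2 := (pow_two _).symm
      _ ≤ _ := le_iSup (fun k => (f k) ^ 2) j
  · calc f i * f j ≤ f i * f i := mul_le_mul_right h _
      _ = (f i) ^ 2 := (pow_two _).symm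
      _ ≤ _ := le_iSup (fun k => (f k) ^ 2) i

lemma pair_sq_le (hK : IsKClass a ⊤) {m n : ℕ} (hp : ConsecPair a m n) :
    ((n - m : ℕ) : ℝ≥0∞) ^ 2 ≤ 4 * ⨆ t ∈ Set.Ioi (0:ℝ), ENNReal.ofReal (varf a t) := by
  have hcast : ((n - m : ℕ) : ℝ) = (n:ℝ) - m := by
    have := hp.2.2.1
    push_cast [Nat.cast_sub this.le]
    ring
  have h1 : ((n - m : ℕ) : ℝ≥0∞) ^ 2 = ENNReal.ofReal (((n:ℝ) - m) ^ 2) := by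
    rw [← ENNReal.ofReal_natCast (n - m), ← ENNReal.ofReal_pow (Nat.cast_nonneg _), hcast]
  rw [h1, show ((n:ℝ) - m) ^ 2 = 4 * (((n:ℝ) - m) ^ 2 / 4) by ring,
    ENNReal.ofReal_mul (by norm_num : (0:ℝ) ≤ 4)]
  rw [show ENNReal.ofReal (4:ℝ) = 4 by norm_num]
  exact mul_le_mul_right (pair_le hK hp) 4

end BG

/-- Boĭchuk–Gol'dberg: for `f ∈ K` entire,
`sup_{t>0} σ_f²(t) ≥ gap(f)²/4`; in particular `sup_{t>0} σ_f²(t) ≥ 1/4`. -/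
theorem sup_var_ge_gap_sq_div_four (a : ℕ → ℝ) (hK : IsKClass a ⊤) :
    gapENN a ^ 2 / 4 ≤ (⨆ t ∈ Set.Ioi (0 : ℝ), ENNReal.ofReal (varf a t)) ∧
    1 / 4 ≤ (⨆ t ∈ Set.Ioi (0 : ℝ), ENNReal.ofReal (varf a t)) := by
  classical
  set S := ⨆ t ∈ Set.Ioi (0 : ℝ), ENNReal.ofReal (varf a t) with hS
  have hsq : gapENN a ^ 2 ≤ 4 * S := by
    unfold gapENN
    calc (⨆ (m : ℕ) (n : ℕ) (_ : ConsecPair a m n), ((n - m : ℕ) : ℝ≥0∞)) ^ 2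
        ≤ ⨆ (m : ℕ), (⨆ (n : ℕ) (_ : ConsecPair a m n), ((n - m : ℕ) : ℝ≥0∞)) ^ 2 :=
          BG.sq_iSup_le _
      _ ≤ ⨆ (m : ℕ) (n : ℕ), (⨆ (_ : ConsecPair a m n), ((n - m : ℕ) : ℝ≥0∞)) ^ 2 :=
          iSup_mono fun m => BG.sq_iSup_le _
      _ ≤ ⨆ (m : ℕ) (n : ℕ) (_ : ConsecPair a m n), ((n - m : ℕ) : ℝ≥0∞) ^ 2 :=
          iSup_mono fun m => iSup_mono fun n => BG.sq_iSup_le _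
      _ ≤ 4 * S := iSup_le fun m => iSup_le fun n => iSup_le fun hp => BG.pair_sq_le hK hp
  have hdiv : gapENN a ^ 2 / 4 ≤ S := by
    calc gapENN a ^ 2 / 4 ≤ 4 * S / 4 := ENNReal.div_le_div_right hsq 4
      _ = S := by
        rw [mul_comm 4 S, mul_div_assoc, ENNReal.div_self (by norm_num) (by norm_num), mul_one]
  refine ⟨hdiv, ?_⟩
  -- minimal positive index with nonzero coefficient
  obtain ⟨n₁, hn₁1, hn₁pos⟩ := hK.2.2.1
  have hex : ∃ k : ℕ, 0 < k ∧ a k ≠ 0 := ⟨n₁, hn₁1, hn₁pos.ne'⟩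
  set n₀ := Nat.find hex with hn₀
  obtain ⟨hn₀pos, hn₀ne⟩ := Nat.find_spec hex
  have hpair : ConsecPair a 0 n₀ := by
    refine ⟨hK.2.1.ne', hn₀ne, hn₀pos, fun j hj1 hj2 => ?_⟩
    by_contra hz
    exact Nat.find_min hex hj2 ⟨hj1, hz⟩
  have hgap1 : (1 : ℝ≥0∞) ≤ gapENN a := by
    have hle : ((n₀ - 0 : ℕ) : ℝ≥0∞) ≤ gapENN a := by
      unfold gapENN
      exact le_iSup_of_le 0 (le_iSup_of_le n₀ (le_iSup_of_le hpair le_rfl))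
    refine le_trans ?_ hle
    simp only [Nat.sub_zero]
    exact_mod_cast Nat.one_le_cast.2 hn₀pos
  calc (1 : ℝ≥0∞) / 4 ≤ gapENN a ^ 2 / 4 := by
        apply ENNReal.div_le_div_right
        calc (1 : ℝ≥0∞) = 1 ^ 2 := (one_pow 2).symm
          _ ≤ gapENN a ^ 2 := pow_le_pow_left' hgap1 2
    _ ≤ S := hdiv
end
end

section
/- (Boĭchuk–Gol'dberg, limsup form) Let f be an entire transcendental power series in the class K, i.e., f is not a polynomial (it has infinitely many nonzero coefficients). Then limsup_{t→∞} σ_f²(t) ≥ ḡap(f)²/4, where ḡap(f) is the upper gap; in particular limsup_{t→∞} σ_f²(t) ≥ 1/4. -/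
open Filter MeasureTheory Topology Real
open scoped ENNReal

noncomputable section

/-- The upper gap `ḡap(f) = limsup_k (n_{k+1} − n_k)`, as an extended nonnegative real:
the supremum of the natural numbers `d` such that arbitrarily far out there is a
consecutive pair of nonzero-coefficient indices at distance at least `d`. -/
def gapBarENN (a : ℕ → ℝ) : ℝ≥0∞ :=
  ⨆ (d : ℕ) (_ : ∀ N : ℕ, ∃ m n : ℕ, N ≤ m ∧ ConsecPair a m n ∧ d ≤ n - m),
    (d : ℝ≥0∞)

namespace BGaux

/-- `Σ n aₙ tⁿ`. -/
def S1 (a : ℕ → ℝ) (t : ℝ) : ℝ := ∑' n : ℕ, (n : ℝ) * a n * t ^ n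

/-- `Σ n² aₙ tⁿ`. -/
def S2 (a : ℕ → ℝ) (t : ℝ) : ℝ := ∑' n : ℕ, (n : ℝ) ^ 2 * a n * t ^ n

variable {a : ℕ → ℝ}

lemma sum0 (hK : IsKClass a ⊤) {t : ℝ} (ht : 0 < t) :
    Summable (fun n : ℕ => a n * t ^ n) := by
  have h := hK.2.2.2.1 0 t ht (by simp)
  simpa [Real.rpow_zero] using h

lemma sum1 (hK : IsKClass a ⊤) {t : ℝ} (ht : 0 < t) :
    Summable (fun n : ℕ => (n : ℝ) * a n * t ^ n) := by
  have h := hK.2.2.2.1 1 t ht (by simp)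
  simpa [Real.rpow_one] using h

lemma sum2 (hK : IsKClass a ⊤) {t : ℝ} (ht : 0 < t) :
    Summable (fun n : ℕ => (n : ℝ) ^ 2 * a n * t ^ n) := by
  have h := hK.2.2.2.1 2 t ht (by simp)
  have e : ∀ n : ℕ, (n : ℝ) ^ (2 : ℝ) = (n : ℝ) ^ (2 : ℕ) := by
    intro n
    rw [show (2 : ℝ) = ((2 : ℕ) : ℝ) by norm_num, Real.rpow_natCast]
  simpa [e] using h

lemma mf_eq (t : ℝ) : mf a t = S1 a t / fsum a t := by
  unfold mf moment S1
  congr 1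
  exact tsum_congr fun n => by rw [Real.rpow_one]

lemma mom2_eq (t : ℝ) : moment a 2 t = S2 a t / fsum a t := by
  unfold moment S2
  congr 1
  refine tsum_congr fun n => ?_
  rw [show (2 : ℝ) = ((2 : ℕ) : ℝ) by norm_num, Real.rpow_natCast]

lemma fsum_ge (hK : IsKClass a ⊤) {t : ℝ} (ht : 0 < t) : a 0 ≤ fsum a t := by
  have h := Summable.le_tsum (sum0 hK ht) 0
    (fun j _ => mul_nonneg (hK.1 j) (pow_nonneg ht.le j))
  simpa [fsum] using h

lemma fsum_pos (hK : IsKClass a ⊤) {t : ℝ} (ht : 0 < t) : 0 < fsum a t :=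
  lt_of_lt_of_le hK.2.1 (fsum_ge hK ht)

lemma S1_nonneg (hK : IsKClass a ⊤) {t : ℝ} (ht : 0 < t) : 0 ≤ S1 a t :=
  tsum_nonneg fun n => mul_nonneg (mul_nonneg (Nat.cast_nonneg n) (hK.1 n))
    (pow_nonneg ht.le n)

/-- Continuity of `t ↦ Σ cₙ tⁿ` on `[0,B]` for nonneg `c` summable at `B`. -/
lemma contOn (c : ℕ → ℝ) (hc : ∀ n, 0 ≤ c n) {B : ℝ} (hB : 0 ≤ B)
    (hs : Summable fun n => c n * B ^ n) :
    ContinuousOn (fun t : ℝ => ∑' n : ℕ, c n * t ^ n) (Set.Icc 0 B) := by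
  refine continuousOn_tsum (u := fun n => c n * B ^ n)
    (fun i => (continuous_const.mul (continuous_pow i)).continuousOn) hs ?_
  intro n x hx
  rw [Real.norm_eq_abs, abs_mul, abs_of_nonneg (hc n), abs_pow, abs_of_nonneg hx.1]
  exact mul_le_mul_of_nonneg_left (pow_le_pow_left₀ hx.1 hx.2 n) (hc n)

/-- Variance lower bound when the mean sits at the middle of a gap. -/
lemma var_ge (hK : IsKClass a ⊤) {m n : ℕ} (hmn : ConsecPair a m n) {t : ℝ}
    (ht : 0 < t) (hmean : mf a t = ((m : ℝ) + n) / 2) :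
    (((n : ℝ) - m) / 2) ^ 2 ≤ varf a t := by
  have hf : 0 < fsum a t := fsum_pos hK ht
  have hs0 := sum0 hK ht
  have hs1 := sum1 hK ht
  have hs2 := sum2 hK ht
  have hmn' : (m : ℝ) < n := by exact_mod_cast hmn.2.2.1
  -- key pointwise inequality summed up
  have hfe : (fun j : ℕ => ((j : ℝ) - m) * ((j : ℝ) - n) * (a j * t ^ j))
      = fun j : ℕ => ((j : ℝ) ^ 2 * a j * t ^ j) - ((m : ℝ) + n) * ((j : ℝ) * a j * t ^ j)
        + (m : ℝ) * n * (a j * t ^ j) := funext fun j => by ring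
  have hsum : Summable (fun j : ℕ => ((j : ℝ) - m) * ((j : ℝ) - n) * (a j * t ^ j)) := by
    rw [hfe]
    exact (hs2.sub (hs1.mul_left _)).add (hs0.mul_left _)
  have hnn : ∀ j : ℕ, 0 ≤ ((j : ℝ) - m) * ((j : ℝ) - n) * (a j * t ^ j) := by
    intro j
    rcases eq_or_ne (a j) 0 with h | h
    · simp [h]
    · have hj : j ≤ m ∨ n ≤ j := by
        by_contra hcon
        push_neg at hcon
        exact h (hmn.2.2.2 j hcon.1 hcon.2)
      have h1 : 0 ≤ ((j : ℝ) - m) * ((j : ℝ) - n) := by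
        rcases hj with h' | h'
        · have hj' : (j : ℝ) ≤ m := by exact_mod_cast h'
          nlinarith
        · have hj' : (n : ℝ) ≤ j := by exact_mod_cast h'
          nlinarith
      exact mul_nonneg h1 (mul_nonneg (hK.1 j) (pow_nonneg ht.le j))
  have hpos : 0 ≤ ∑' j : ℕ, ((j : ℝ) - m) * ((j : ℝ) - n) * (a j * t ^ j) :=
    tsum_nonneg hnn
  have heq : ∑' j : ℕ, ((j : ℝ) - m) * ((j : ℝ) - n) * (a j * t ^ j)
      = S2 a t - ((m : ℝ) + n) * S1 a t + (m : ℝ) * n * fsum a t := by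
    rw [hfe, Summable.tsum_add (hs2.sub (hs1.mul_left _)) (hs0.mul_left _),
      Summable.tsum_sub hs2 (hs1.mul_left _), tsum_mul_left, tsum_mul_left]
    rfl
  have key : ((m : ℝ) + n) * S1 a t - (m : ℝ) * n * fsum a t ≤ S2 a t := by
    rw [heq] at hpos; linarith
  have hS1 : S1 a t = (((m : ℝ) + n) / 2) * fsum a t := by
    have hm : S1 a t / fsum a t = ((m : ℝ) + n) / 2 := by rw [← mf_eq]; exact hmean
    field_simp at hm
    linarith
  unfold varf
  rw [mom2_eq, hmean, le_sub_iff_add_le, le_div_iff₀ hf]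
  have key' : ((m : ℝ) + n) * (((m : ℝ) + n) / 2 * fsum a t)
      - (m : ℝ) * n * fsum a t ≤ S2 a t := by rw [← hS1]; exact key
  nlinarith [key']

/-- The mean is bounded on `(0, T]`. -/
lemma mf_le (hK : IsKClass a ⊤) {t T : ℝ} (ht : 0 < t) (htT : t ≤ T) :
    mf a t ≤ S1 a T / a 0 := by
  have hT : 0 < T := lt_of_lt_of_le ht htT
  have h1 : S1 a t ≤ S1 a T := by
    refine Summable.tsum_le_tsum (fun n => ?_) (sum1 hK ht) (sum1 hK hT)
    exact mul_le_mul_of_nonneg_left (pow_le_pow_left₀ ht.le htT n)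
      (mul_nonneg (Nat.cast_nonneg n) (hK.1 n))
  have h0 : 0 ≤ S1 a t := S1_nonneg hK ht
  rw [mf_eq]
  calc S1 a t / fsum a t ≤ S1 a t / a 0 :=
        div_le_div_of_nonneg_left h0 hK.2.1 (fsum_ge hK ht)
    _ ≤ S1 a T / a 0 := (div_le_div_iff_of_pos_right hK.2.1).mpr h1


/-- For every `k`, there are arbitrarily large `t` with `mf a t ≥ k`. -/
lemma exists_large_mean (hK : IsKClass a ⊤) (htrans : {n : ℕ | a n ≠ 0}.Infinite)
    (k : ℕ) (T : ℝ) : ∃ t : ℝ, T ≤ t ∧ (k : ℝ) ≤ mf a t := by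
  obtain ⟨N, hN, hkN⟩ := htrans.exists_gt k
  have haN : 0 < a N := lt_of_le_of_ne (hK.1 N) (Ne.symm hN)
  set A : ℝ := ∑ j ∈ Finset.range k, a j with hA
  set t : ℝ := max (max 1 T) ((k : ℝ) * A / a N) with htdef
  have ht1 : (1 : ℝ) ≤ t := le_trans (le_max_left 1 T) (le_max_left _ _)
  have htT : T ≤ t := le_trans (le_max_right 1 T) (le_max_left _ _)
  have htA : (k : ℝ) * A / a N ≤ t := le_max_right _ _
  have ht : 0 < t := lt_of_lt_of_le one_pos ht1
  refine ⟨t, htT, ?_⟩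
  set g : ℕ → ℝ := fun j => ((j : ℝ) - k) * (a j * t ^ j) with hgdef
  have hge : g = fun j : ℕ => ((j : ℝ) * a j * t ^ j) - (k : ℝ) * (a j * t ^ j) :=
    funext fun j => by simp only [hgdef]; ring
  have hg : Summable g := by
    rw [hge]; exact (sum1 hK ht).sub ((sum0 hK ht).mul_left _)
  have htsum_eq : ∑' i, g i = S1 a t - (k : ℝ) * fsum a t := by
    rw [hge, Summable.tsum_sub (sum1 hK ht) ((sum0 hK ht).mul_left _), tsum_mul_left]
    rfl
  have hsplit := Summable.sum_add_tsum_nat_add k hg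
  have hshift : Summable (fun i => g (i + k)) := (summable_nat_add_iff k).2 hg
  -- tail bound
  have htail : g N ≤ ∑' i, g (i + k) := by
    have hNk' : N - k + k = N := by omega
    have hNe : g N = (fun i => g (i + k)) (N - k) := by
      show g N = g (N - k + k); rw [hNk']
    rw [hNe]
    refine Summable.le_tsum hshift (N - k) fun j _ => ?_
    have h1 : (k : ℝ) ≤ ((j + k : ℕ) : ℝ) := by
      push_cast; linarith [Nat.cast_nonneg (α := ℝ) j]
    exact mul_nonneg (by linarith) (mul_nonneg (hK.1 _) (pow_nonneg ht.le _))
  -- finite part bound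
  have hfin : -((k : ℝ) * A * t ^ k) ≤ ∑ i ∈ Finset.range k, g i := by
    have hterm : ∀ i ∈ Finset.range k, -((k : ℝ) * (a i * t ^ k)) ≤ g i := by
      intro i hi
      have hik : i < k := Finset.mem_range.mp hi
      have hik' : (i : ℝ) ≤ k := by exact_mod_cast hik.le
      have hpw : t ^ i ≤ t ^ k := pow_le_pow_right₀ ht1 hik.le
      have hai := hK.1 i
      have h1 : ((k : ℝ) - i) * (a i * t ^ i) ≤ (k : ℝ) * (a i * t ^ k) := by
        have h2 : a i * t ^ i ≤ a i * t ^ k := mul_le_mul_of_nonneg_left hpw hai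
        have h3 : 0 ≤ a i * t ^ i := mul_nonneg hai (pow_nonneg ht.le i)
        nlinarith [Nat.cast_nonneg (α := ℝ) i, Nat.cast_nonneg (α := ℝ) k]
      simp only [hgdef]; nlinarith [h1]
    have hsum_eq : ∑ i ∈ Finset.range k, ((k : ℝ) * (a i * t ^ k)) = (k : ℝ) * A * t ^ k := by
      rw [hA, Finset.mul_sum, Finset.sum_mul]
      exact Finset.sum_congr rfl fun i _ => by ring
    calc -((k : ℝ) * A * t ^ k) = ∑ i ∈ Finset.range k, -((k : ℝ) * (a i * t ^ k)) := by
          rw [Finset.sum_neg_distrib, hsum_eq]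
      _ ≤ ∑ i ∈ Finset.range k, g i := Finset.sum_le_sum hterm
  -- main term bound
  have hgN : (k : ℝ) * A * t ^ k ≤ g N := by
    have hkN' : (k : ℝ) + 1 ≤ N := by exact_mod_cast hkN
    have hpow : t ^ N = t ^ k * t ^ (N - k) := by
      rw [← pow_add]; congr 1; omega
    have hpow2 : t ≤ t ^ (N - k) := le_self_pow₀ ht1 (by omega)
    have hAt : (k : ℝ) * A ≤ a N * t := by
      have := (div_le_iff₀ haN).mp htA
      linarith [this]
    have htk : (0 : ℝ) ≤ t ^ k := pow_nonneg ht.le k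
    have h1 : (k : ℝ) * A * t ^ k ≤ a N * t * t ^ k :=
      mul_le_mul_of_nonneg_right hAt htk
    have h2 : a N * t * t ^ k ≤ a N * t ^ (N - k) * t ^ k := by
      have := mul_le_mul_of_nonneg_left hpow2 haN.le
      nlinarith [this, htk]
    have h3 : a N * t ^ (N - k) * t ^ k = a N * t ^ N := by
      rw [hpow]; ring
    have h4 : a N * t ^ N ≤ ((N : ℝ) - k) * (a N * t ^ N) := by
      have hpos : 0 ≤ a N * t ^ N := mul_nonneg haN.le (pow_nonneg ht.le N)
      nlinarith [hpos, hkN']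
    simp only [hgdef]
    linarith
  -- combine
  have hkey : (k : ℝ) * fsum a t ≤ S1 a t := by
    have : 0 ≤ ∑' i, g i := by
      rw [← hsplit]
      have := le_trans hgN htail
      linarith
    rw [htsum_eq] at this; linarith
  rw [mf_eq, le_div_iff₀ (fsum_pos hK ht)]
  exact hkey


/-- Main frequency lemma: arbitrarily far out, variance exceeds `d²/4`. -/
lemma freq_var (hK : IsKClass a ⊤) (htrans : {n : ℕ | a n ≠ 0}.Infinite) {d : ℕ}
    (hP : ∀ N : ℕ, ∃ m n : ℕ, N ≤ m ∧ ConsecPair a m n ∧ d ≤ n - m) (T0 : ℝ) :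
    ∃ t : ℝ, T0 ≤ t ∧ (d : ℝ) ^ 2 / 4 ≤ varf a t := by
  set T : ℝ := max T0 1 with hTdef
  have hT1 : (1 : ℝ) ≤ T := le_max_right _ _
  have hT0 : T0 ≤ T := le_max_left _ _
  have hTpos : (0 : ℝ) < T := lt_of_lt_of_le one_pos hT1
  set C : ℝ := S1 a T / a 0 with hC
  obtain ⟨m, n, hm, hpair, hd⟩ := hP (⌈C⌉₊ + 1)
  have hmn : m < n := hpair.2.2.1
  have hCm : C < (m : ℝ) := by
    have h1 : C ≤ (⌈C⌉₊ : ℝ) := Nat.le_ceil C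
    have h2 : ((⌈C⌉₊ : ℕ) : ℝ) + 1 ≤ (m : ℝ) := by exact_mod_cast hm
    linarith
  obtain ⟨t₁, ht₁T, ht₁mean⟩ := exists_large_mean hK htrans n T
  have ht₁pos : (0 : ℝ) < t₁ := lt_of_lt_of_le hTpos ht₁T
  have hsub : Set.Icc T t₁ ⊆ Set.Icc 0 t₁ := Set.Icc_subset_Icc_left hTpos.le
  have hcS1 : ContinuousOn (fun t : ℝ => S1 a t) (Set.Icc T t₁) := by
    have h := contOn (fun n : ℕ => (n : ℝ) * a n)
      (fun n => mul_nonneg (Nat.cast_nonneg n) (hK.1 n)) ht₁pos.le (sum1 hK ht₁pos)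
    exact (h.mono hsub)
  have hcf : ContinuousOn (fsum a) (Set.Icc T t₁) := by
    have h := contOn (fun n : ℕ => a n) hK.1 ht₁pos.le (sum0 hK ht₁pos)
    exact (h.mono hsub)
  have hcmf : ContinuousOn (mf a) (Set.Icc T t₁) := by
    have h := hcS1.div hcf
      (fun x hx => (fsum_pos hK (lt_of_lt_of_le hTpos hx.1)).ne')
    exact h.congr (fun x _ => mf_eq x)
  have hmem : ((m : ℝ) + n) / 2 ∈ Set.Icc (mf a T) (mf a t₁) := by
    have hmncast : (m : ℝ) ≤ n := by exact_mod_cast hmn.le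
    constructor
    · have h3 : mf a T ≤ S1 a T / a 0 := mf_le hK hTpos le_rfl
      rw [← hC] at h3
      linarith
    · linarith [ht₁mean]
  obtain ⟨t, htmem, htc⟩ := intermediate_value_Icc ht₁T hcmf hmem
  refine ⟨t, le_trans hT0 htmem.1, ?_⟩
  have ht : 0 < t := lt_of_lt_of_le hTpos htmem.1
  have hvar := var_ge hK hpair ht htc
  have hd' : (d : ℝ) ≤ (n : ℝ) - (m : ℝ) := by
    have h1 : (d : ℝ) ≤ ((n - m : ℕ) : ℝ) := by exact_mod_cast hd
    rwa [Nat.cast_sub hmn.le] at h1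
  nlinarith [hvar, hd', Nat.cast_nonneg (α := ℝ) d]

/-- limsup lower bound from the frequency lemma. -/
lemma limsup_ge_of_P (hK : IsKClass a ⊤) (htrans : {n : ℕ | a n ≠ 0}.Infinite) {d : ℕ}
    (hP : ∀ N : ℕ, ∃ m n : ℕ, N ≤ m ∧ ConsecPair a m n ∧ d ≤ n - m) :
    (d : ℝ≥0∞) ^ 2 / 4 ≤ Filter.limsup (fun t : ℝ => ENNReal.ofReal (varf a t)) atTop := by
  apply Filter.le_limsup_of_frequently_le'
  rw [Filter.frequently_atTop]
  intro T
  obtain ⟨t, hTt, hvar⟩ := freq_var hK htrans hP T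
  refine ⟨t, hTt, ?_⟩
  calc (d : ℝ≥0∞) ^ 2 / 4 = ENNReal.ofReal ((d : ℝ) ^ 2 / 4) := by
        rw [ENNReal.ofReal_div_of_pos (by norm_num),
          ENNReal.ofReal_pow (Nat.cast_nonneg d), ENNReal.ofReal_natCast,
          ENNReal.ofReal_ofNat]
    _ ≤ ENNReal.ofReal (varf a t) := ENNReal.ofReal_le_ofReal hvar

/-- Consecutive pairs exist arbitrarily far out. -/
lemma hP_one (htrans : {n : ℕ | a n ≠ 0}.Infinite) :
    ∀ N : ℕ, ∃ m n : ℕ, N ≤ m ∧ ConsecPair a m n ∧ 1 ≤ n - m := by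
  intro N
  obtain ⟨m, hm, hNm⟩ := htrans.exists_gt N
  have hex : ∃ i : ℕ, a (m + 1 + i) ≠ 0 := by
    obtain ⟨b, hb, hmb⟩ := htrans.exists_gt m
    exact ⟨b - (m + 1), by rwa [show m + 1 + (b - (m + 1)) = b by omega]⟩
  classical
  refine ⟨m, m + 1 + Nat.find hex, hNm.le, ⟨hm, Nat.find_spec hex, by omega, ?_⟩, by omega⟩
  intro j hj1 hj2
  by_contra hj
  have hlt : j - (m + 1) < Nat.find hex := by omega
  exact Nat.find_min hex hlt (by rwa [show m + 1 + (j - (m + 1)) = j by omega])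

end BGaux

open BGaux in
/-- Boĭchuk–Gol'dberg, limsup form: for `f ∈ K` entire transcendental,
`limsup_{t→∞} σ_f²(t) ≥ ḡap(f)²/4`; in particular it is `≥ 1/4`. -/
theorem limsup_var_ge_gapBar_sq_div_four (a : ℕ → ℝ) (hK : IsKClass a ⊤)
    (htrans : {n : ℕ | a n ≠ 0}.Infinite) :
    gapBarENN a ^ 2 / 4 ≤ Filter.limsup (fun t : ℝ => ENNReal.ofReal (varf a t)) atTop ∧
    1 / 4 ≤ Filter.limsup (fun t : ℝ => ENNReal.ofReal (varf a t)) atTop := by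
  classical
  set L := Filter.limsup (fun t : ℝ => ENNReal.ofReal (varf a t)) atTop with hL
  set P : ℕ → Prop :=
    fun d => ∀ N : ℕ, ∃ m n : ℕ, N ≤ m ∧ ConsecPair a m n ∧ d ≤ n - m with hPdef
  have key : ∀ d : ℕ, P d → (d : ℝ≥0∞) ^ 2 / 4 ≤ L :=
    fun d hd => limsup_ge_of_P hK htrans hd
  have hP1 : P 1 := hP_one htrans
  have hP0 : P 0 := fun N => by
    obtain ⟨m, n, h1, h2, _⟩ := hP1 N
    exact ⟨m, n, h1, h2, Nat.zero_le _⟩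
  constructor
  · by_cases hbd : ∃ D : ℕ, ∀ d : ℕ, P d → d ≤ D
    · obtain ⟨D, hD⟩ := hbd
      set D' := Nat.findGreatest P D with hD'
      have hPD' : P D' := Nat.findGreatest_spec (Nat.zero_le D) hP0
      have hgap : gapBarENN a ≤ (D' : ℝ≥0∞) := by
        refine iSup_le fun d => iSup_le fun hd => ?_
        exact Nat.cast_le.mpr (Nat.le_findGreatest (hD d hd) hd)
      calc gapBarENN a ^ 2 / 4 ≤ (D' : ℝ≥0∞) ^ 2 / 4 := by gcongr
        _ ≤ L := key D' hPD'
    · push_neg at hbd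
      have hLtop : L = ⊤ := by
        refine ENNReal.eq_top_of_forall_nnreal_le fun r => ?_
        obtain ⟨d, hPd, hdlt⟩ := hbd (max 4 ⌈(r : ℝ)⌉₊)
        have h4d : (4 : ℕ) ≤ d := le_trans (le_max_left _ _) hdlt.le
        have hrd : ((r : ℝ≥0∞)) ≤ (d : ℝ≥0∞) := by
          have h1 : (r : ℝ) ≤ (d : ℝ) := by
            calc (r : ℝ) ≤ (⌈(r : ℝ)⌉₊ : ℝ) := Nat.le_ceil _
              _ ≤ (d : ℝ) := by
                  exact_mod_cast (le_trans (le_max_right _ _) hdlt.le)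
          exact_mod_cast h1
        have hdd : (d : ℝ≥0∞) ≤ (d : ℝ≥0∞) ^ 2 / 4 := by
          rw [ENNReal.le_div_iff_mul_le (Or.inl (by norm_num)) (Or.inl (by norm_num))]
          have : ((4 : ℕ) : ℝ≥0∞) ≤ (d : ℝ≥0∞) := Nat.cast_le.mpr h4d
          calc (d : ℝ≥0∞) * 4 = (d : ℝ≥0∞) * ((4 : ℕ) : ℝ≥0∞) := by norm_num
            _ ≤ (d : ℝ≥0∞) * (d : ℝ≥0∞) := mul_le_mul_right this _
            _ = (d : ℝ≥0∞) ^ 2 := (sq (d : ℝ≥0∞)).symm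
        exact le_trans (le_trans hrd hdd) (key d hPd)
      rw [hLtop]
      exact le_top
  · have h := key 1 hP1
    simpa using h
end
end

section
/- (Abi-Khuzzam) Let f be an entire power series in the class K. Then sup_{t>0} σ_f²(t) = 1/4 if and only if f(z) = a + bz for some reals a, b > 0. -/
open Filter MeasureTheory Topology Real
open scoped ENNReal

noncomputable section

lemma summable_beta {a : ℕ → ℝ} (hK : IsKClass a ⊤) (β t : ℝ) (ht : 0 < t) :
    Summable (fun n : ℕ => (n : ℝ) ^ β * a n * t ^ n) :=
  hK.2.2.2.1 β t ht (by simp)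

lemma summable0 {a : ℕ → ℝ} (hK : IsKClass a ⊤) {t : ℝ} (ht : 0 < t) :
    Summable (fun n : ℕ => a n * t ^ n) := by
  simpa [Real.rpow_zero] using summable_beta hK 0 t ht

lemma fsum_ge {a : ℕ → ℝ} (hK : IsKClass a ⊤) {t : ℝ} (ht : 0 < t) : a 0 ≤ fsum a t := by
  have h := Summable.le_tsum (summable0 hK ht) 0
    (fun j _ => mul_nonneg (hK.1 j) (pow_nonneg ht.le j))
  simpa [fsum] using h

lemma fsum_pos {a : ℕ → ℝ} (hK : IsKClass a ⊤) {t : ℝ} (ht : 0 < t) : 0 < fsum a t :=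
  lt_of_lt_of_le hK.2.1 (fsum_ge hK ht)

lemma contOn {a : ℕ → ℝ} (hK : IsKClass a ⊤) (β ε T : ℝ) (hε : 0 < ε) (hεT : ε ≤ T) :
    ContinuousOn (fun t => ∑' n : ℕ, (n : ℝ) ^ β * a n * t ^ n) (Set.Icc ε T) := by
  have hT : 0 < T := hε.trans_le hεT
  have hu : Summable (fun n : ℕ => (n : ℝ) ^ β * a n * T ^ n) := summable_beta hK β T hT
  have hcont : Continuous (fun x : ℝ => ∑' n : ℕ, (n : ℝ) ^ β * a n * (max ε (min x T)) ^ n) := by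
    apply continuous_tsum
      (fun n => continuous_const.mul ((continuous_const.max (continuous_id.min continuous_const)).pow n)) hu

    intro n x
    have h1 : (0:ℝ) ≤ max ε (min x T) := le_trans hε.le (le_max_left _ _)
    have h2 : max ε (min x T) ≤ T := max_le hεT (min_le_right x T)
    have hnn : 0 ≤ (n : ℝ) ^ β * a n := mul_nonneg (Real.rpow_nonneg (Nat.cast_nonneg n) β) (hK.1 n)
    simp only [id_eq, Pi.mul_apply, Pi.pow_apply]
    rw [Real.norm_eq_abs, abs_of_nonneg (mul_nonneg hnn (pow_nonneg h1 n))]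
    exact mul_le_mul_of_nonneg_left (pow_le_pow_left₀ h1 h2 n) hnn
  apply hcont.continuousOn.congr
  intro x hx
  simp only
  rw [min_eq_left hx.2, max_eq_right hx.1]

lemma rpow_two_eq (x : ℝ) : x ^ (2:ℝ) = x ^ (2:ℕ) := by
  rw [show (2:ℝ) = ((2:ℕ):ℝ) by norm_num, Real.rpow_natCast]

lemma mf_eq {a : ℕ → ℝ} (t : ℝ) :
    mf a t = (∑' n : ℕ, (n : ℝ) * a n * t ^ n) / fsum a t := by
  simp [mf, moment, Real.rpow_one]

lemma fsum_eq_S0 {a : ℕ → ℝ} (t : ℝ) :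
    fsum a t = ∑' n : ℕ, (n : ℝ) ^ (0:ℝ) * a n * t ^ n := by
  simp [fsum, Real.rpow_zero]

lemma summable1 {a : ℕ → ℝ} (hK : IsKClass a ⊤) {t : ℝ} (ht : 0 < t) :
    Summable (fun n : ℕ => (n : ℝ) * a n * t ^ n) := by
  simpa [Real.rpow_one] using summable_beta hK 1 t ht

lemma summable2 {a : ℕ → ℝ} (hK : IsKClass a ⊤) {t : ℝ} (ht : 0 < t) :
    Summable (fun n : ℕ => (n : ℝ) ^ (2:ℕ) * a n * t ^ n) := by
  simpa [rpow_two_eq] using summable_beta hK 2 t ht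

/-- small t: mean < 1/2 -/
lemma exists_small {a : ℕ → ℝ} (hK : IsKClass a ⊤) :
    ∃ t : ℝ, 0 < t ∧ t ≤ 1 ∧ mf a t < 1/2 := by
  set C : ℝ := ∑' n : ℕ, (n : ℝ) * a n * 1 ^ n with hCdef
  have hCsum : Summable (fun n : ℕ => (n : ℝ) * a n * 1 ^ n) := summable1 hK one_pos
  have hCnn : 0 ≤ C := tsum_nonneg fun n =>
    mul_nonneg (mul_nonneg (Nat.cast_nonneg n) (hK.1 n)) (pow_nonneg one_pos.le n)
  have ha0 : 0 < a 0 := hK.2.1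
  set t : ℝ := min 1 (a 0 / (2 * (C + 1))) with htdef
  have htpos : 0 < t := lt_min one_pos (div_pos ha0 (by linarith))
  have ht1 : t ≤ 1 := min_le_left _ _
  refine ⟨t, htpos, ht1, ?_⟩
  have hS1le : (∑' n : ℕ, (n : ℝ) * a n * t ^ n) ≤ t * C := by
    rw [hCdef, ← tsum_mul_left]
    refine Summable.tsum_le_tsum (fun n => ?_) (summable1 hK htpos) (hCsum.mul_left t)
    rcases n with _ | m
    · simp
    · have h1 : t ^ (m+1) ≤ t := pow_le_of_le_one htpos.le ht1 (Nat.succ_ne_zero m)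
      have h2 : (0:ℝ) ≤ (m+1 : ℕ) * a (m+1) := mul_nonneg (Nat.cast_nonneg _) (hK.1 _)
      calc ((m+1 : ℕ) : ℝ) * a (m+1) * t ^ (m+1) ≤ ((m+1 : ℕ) : ℝ) * a (m+1) * t :=
            mul_le_mul_of_nonneg_left h1 h2
        _ = t * (((m+1 : ℕ) : ℝ) * a (m+1) * 1 ^ (m+1)) := by ring
  have hfge : a 0 ≤ fsum a t := fsum_ge hK htpos
  have hfpos : 0 < fsum a t := fsum_pos hK htpos
  have hS1nn : 0 ≤ ∑' n : ℕ, (n : ℝ) * a n * t ^ n := tsum_nonneg fun n =>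
    mul_nonneg (mul_nonneg (Nat.cast_nonneg n) (hK.1 n)) (pow_nonneg htpos.le n)
  rw [mf_eq]
  have h1 : (∑' n : ℕ, (n : ℝ) * a n * t ^ n) / fsum a t
      ≤ (∑' n : ℕ, (n : ℝ) * a n * t ^ n) / a 0 :=
    div_le_div_of_nonneg_left hS1nn ha0 hfge
  have h2 : (∑' n : ℕ, (n : ℝ) * a n * t ^ n) / a 0 ≤ (t * C) / a 0 :=
    div_le_div_of_nonneg_right hS1le ha0.le
  have ht2 : t ≤ a 0 / (2 * (C + 1)) := min_le_right _ _
  have ht3 : t * (2 * (C + 1)) ≤ a 0 := by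
    rw [← le_div_iff₀ (by linarith)]; exact ht2
  have h3 : (t * C) / a 0 < 1/2 := by
    rw [div_lt_iff₀ ha0]
    nlinarith [mul_pos htpos (show (0:ℝ) < 2 by norm_num)]
  linarith

/-- large t: mean > 1/2 -/
lemma exists_large {a : ℕ → ℝ} (hK : IsKClass a ⊤) (s : ℝ) :
    ∃ t : ℝ, s ≤ t ∧ 0 < t ∧ 1/2 < mf a t := by
  obtain ⟨n₁, hn₁, ha₁⟩ := hK.2.2.1
  have hn₁0 : n₁ ≠ 0 := by omega
  set t : ℝ := max (max s 1) ((a 0 + a n₁) / a n₁) with htdef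
  have ht1 : (1:ℝ) ≤ t := le_trans (le_max_right s 1) (le_max_left _ _)
  have htpos : 0 < t := lt_of_lt_of_le one_pos ht1
  have hts : s ≤ t := le_trans (le_max_left s 1) (le_max_left _ _)
  refine ⟨t, hts, htpos, ?_⟩
  have hkey : a 0 < a n₁ * t ^ n₁ := by
    have h1 : (a 0 + a n₁) / a n₁ ≤ t := le_max_right _ _
    have h2 : a 0 + a n₁ ≤ a n₁ * t := by
      rw [div_le_iff₀ ha₁] at h1; linarith [h1]
    have h3 : t ≤ t ^ n₁ := le_self_pow₀ ht1 hn₁0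
    have h4 : a n₁ * t ≤ a n₁ * t ^ n₁ := mul_le_mul_of_nonneg_left h3 ha₁.le
    linarith
  -- 2*S1 - f > 0
  have hs0 := summable0 hK htpos
  have hs1 := summable1 hK htpos
  set g : ℕ → ℝ := fun n => (2 * (n:ℝ) - 1) * a n * t ^ n with hgdef
  have hgsum : Summable g := by
    apply Summable.congr ((hs1.mul_left 2).sub hs0)
    intro n; simp [hgdef]; ring
  have hgt : (∑' n, g n) = 2 * (∑' n : ℕ, (n:ℝ) * a n * t ^ n) - fsum a t := by
    rw [fsum, ← tsum_mul_left, ← Summable.tsum_sub (hs1.mul_left 2) hs0]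
    apply tsum_congr; intro n; simp [hgdef]; ring
  have hge : g 0 + g n₁ ≤ ∑' n, g n := by
    have := Summable.sum_le_tsum ({0, n₁} : Finset ℕ) (fun n hn => ?_) hgsum
    · rwa [Finset.sum_pair (Ne.symm hn₁0)] at this
    · have hn0 : n ≠ 0 := fun h => hn (by simp [h])
      have : (1:ℝ) ≤ n := by exact_mod_cast Nat.one_le_iff_ne_zero.2 hn0
      exact mul_nonneg (mul_nonneg (by linarith) (hK.1 n)) (pow_nonneg htpos.le n)
  have hg0 : g 0 = -a 0 := by simp [hgdef]
  have hgn₁ : a n₁ * t ^ n₁ ≤ g n₁ := by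
    have : (1:ℝ) ≤ 2 * (n₁:ℝ) - 1 := by
      have : (1:ℝ) ≤ n₁ := by exact_mod_cast hn₁
      linarith
    have := mul_le_mul_of_nonneg_right this (mul_nonneg ha₁.le (pow_nonneg htpos.le n₁))
    calc a n₁ * t ^ n₁ = 1 * (a n₁ * t ^ n₁) := by ring
      _ ≤ (2 * (n₁:ℝ) - 1) * (a n₁ * t ^ n₁) := this
      _ = g n₁ := by simp [hgdef]; ring
  have hpos : 0 < 2 * (∑' n : ℕ, (n:ℝ) * a n * t ^ n) - fsum a t := by
    rw [← hgt]; linarith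
  have hfpos : 0 < fsum a t := fsum_pos hK htpos
  rw [mf_eq, lt_div_iff₀ hfpos]
  linarith

lemma exists_var_gt {a : ℕ → ℝ} (hK : IsKClass a ⊤) (N : ℕ) (hN : 2 ≤ N) (haN : 0 < a N) :
    ∃ t : ℝ, 0 < t ∧ 1/4 < varf a t := by
  obtain ⟨ts, hts, hts1, hms⟩ := exists_small hK
  obtain ⟨tb, hstb, htb, hmb⟩ := exists_large hK ts
  -- continuity of mf on [ts, tb]
  have h0 : ContinuousOn (fun t => ∑' n : ℕ, (n : ℝ) ^ (0:ℝ) * a n * t ^ n) (Set.Icc ts tb) :=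
    contOn hK 0 ts tb hts hstb
  have h1 : ContinuousOn (fun t => ∑' n : ℕ, (n : ℝ) ^ (1:ℝ) * a n * t ^ n) (Set.Icc ts tb) :=
    contOn hK 1 ts tb hts hstb
  have hmcont : ContinuousOn (mf a) (Set.Icc ts tb) := by
    have hd : ContinuousOn
        (fun t => (∑' n : ℕ, (n : ℝ) ^ (1:ℝ) * a n * t ^ n) /
          (∑' n : ℕ, (n : ℝ) ^ (0:ℝ) * a n * t ^ n)) (Set.Icc ts tb) := by
      apply h1.div h0
      intro x hx
      rw [← fsum_eq_S0]
      exact (fsum_pos hK (lt_of_lt_of_le hts hx.1)).ne'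
    apply hd.congr
    intro x hx
    rw [mf, moment, fsum_eq_S0]
  have hsub := intermediate_value_Icc hstb hmcont
  have hmem : (1/2 : ℝ) ∈ Set.Icc (mf a ts) (mf a tb) := ⟨hms.le, hmb.le⟩
  obtain ⟨t₀, ht₀mem, ht₀⟩ := hsub hmem
  have ht₀pos : 0 < t₀ := lt_of_lt_of_le hts ht₀mem.1
  refine ⟨t₀, ht₀pos, ?_⟩
  -- S2 > S1 strictly
  have hs1 := summable1 hK ht₀pos
  have hs2 := summable2 hK ht₀pos
  have hdiff : (N:ℝ) ^ (2:ℕ) * a N * t₀ ^ N - (N:ℝ) * a N * t₀ ^ N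
      ≤ (∑' n : ℕ, (n:ℝ) ^ (2:ℕ) * a n * t₀ ^ n) - (∑' n : ℕ, (n:ℝ) * a n * t₀ ^ n) := by
    rw [← Summable.tsum_sub hs2 hs1]
    refine Summable.le_tsum (hs2.sub hs1) N (fun j _ => ?_)
    have hj : (j:ℝ) ≤ (j:ℝ) ^ (2:ℕ) := by
      rcases Nat.eq_zero_or_pos j with h | h
      · simp [h]
      · have : (1:ℝ) ≤ j := by exact_mod_cast h
        nlinarith
    have := mul_le_mul_of_nonneg_right (mul_le_mul_of_nonneg_right hj (hK.1 j))
      (pow_nonneg ht₀pos.le j)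
    linarith
  have hNpos : 0 < (N:ℝ) ^ (2:ℕ) * a N * t₀ ^ N - (N:ℝ) * a N * t₀ ^ N := by
    have h2N : (2:ℝ) ≤ N := by exact_mod_cast hN
    have hp : 0 < a N * t₀ ^ N := mul_pos haN (pow_pos ht₀pos N)
    have : (N:ℝ) * (N:ℝ) - (N:ℝ) ≥ (2:ℝ) * (N:ℝ) - (N:ℝ) := by nlinarith
    nlinarith [pow_pos ht₀pos N]
  have hS1ltS2 : (∑' n : ℕ, (n:ℝ) * a n * t₀ ^ n)
      < ∑' n : ℕ, (n:ℝ) ^ (2:ℕ) * a n * t₀ ^ n := by linarith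
  have hfpos : 0 < fsum a t₀ := fsum_pos hK ht₀pos
  have hm12 : (∑' n : ℕ, (n:ℝ) * a n * t₀ ^ n) / fsum a t₀ = 1/2 := by
    rw [← mf_eq]; exact ht₀
  have hmom2 : moment a 2 t₀ = (∑' n : ℕ, (n:ℝ) ^ (2:ℕ) * a n * t₀ ^ n) / fsum a t₀ := by
    rw [moment]; congr 1; apply tsum_congr; intro n; rw [rpow_two_eq]
  have hlt : (1:ℝ)/2 < moment a 2 t₀ := by
    rw [hmom2, ← hm12]
    exact div_lt_div_of_pos_right hS1ltS2 hfpos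
  rw [varf, ht₀]
  nlinarith [hlt]

lemma ofReal_quarter : ENNReal.ofReal (1/4 : ℝ) = 1/4 := by
  rw [ENNReal.ofReal_div_of_pos (by norm_num), ENNReal.ofReal_one, ENNReal.ofReal_ofNat]

section linear
variable {a : ℕ → ℝ} {c d : ℝ}

lemma lin_fsum (hform : ∀ n : ℕ, a n = if n = 0 then c else if n = 1 then d else 0) (t : ℝ) :
    fsum a t = c + d * t := by
  rw [fsum, tsum_eq_sum (s := ({0, 1} : Finset ℕ))
    (fun n hn => by
      have h : n ≠ 0 ∧ n ≠ 1 := by simpa using hn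
      simp [hform, h.1, h.2])]
  rw [Finset.sum_pair (by norm_num)]
  simp [hform]

lemma lin_S (hform : ∀ n : ℕ, a n = if n = 0 then c else if n = 1 then d else 0)
    {β : ℝ} (hβ : β ≠ 0) (t : ℝ) :
    (∑' n : ℕ, (n : ℝ) ^ β * a n * t ^ n) = d * t := by
  rw [tsum_eq_sum (s := ({0, 1} : Finset ℕ))
    (fun n hn => by
      have h : n ≠ 0 ∧ n ≠ 1 := by simpa using hn
      simp [hform, h.1, h.2])]
  rw [Finset.sum_pair (by norm_num)]
  simp [hform, Real.zero_rpow hβ, Real.one_rpow]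

lemma lin_varf (hform : ∀ n : ℕ, a n = if n = 0 then c else if n = 1 then d else 0) (t : ℝ) :
    varf a t = d * t / (c + d * t) - (d * t / (c + d * t)) ^ 2 := by
  rw [varf, mf, moment, moment, lin_S hform one_ne_zero, lin_S hform two_ne_zero,
    lin_fsum hform]
end linear


/-- Abi-Khuzzam: for `f ∈ K` entire, `sup_{t>0} σ_f²(t) = 1/4`
if and only if `f(z) = a + bz` with `a, b > 0`. -/
theorem sup_var_eq_quarter_iff (a : ℕ → ℝ) (hK : IsKClass a ⊤) :
    (⨆ t ∈ Set.Ioi (0 : ℝ), ENNReal.ofReal (varf a t)) = 1 / 4 ↔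
      ∃ c d : ℝ, 0 < c ∧ 0 < d ∧
        ∀ n : ℕ, a n = if n = 0 then c else if n = 1 then d else 0 := by
  constructor
  · intro hsup
    have hvan : ∀ n, 2 ≤ n → a n = 0 := by
      intro n hn
      by_contra hne
      have hpos : 0 < a n := (hK.1 n).lt_of_ne (Ne.symm hne)
      obtain ⟨t, ht, hvar⟩ := exists_var_gt hK n hn hpos
      have hle : ENNReal.ofReal (varf a t)
          ≤ ⨆ t ∈ Set.Ioi (0 : ℝ), ENNReal.ofReal (varf a t) :=
        le_iSup₂ (f := fun t (_ : t ∈ Set.Ioi (0:ℝ)) => ENNReal.ofReal (varf a t)) t ht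
      rw [hsup] at hle
      have hlt : (1/4 : ℝ≥0∞) < ENNReal.ofReal (varf a t) := by
        rw [← ofReal_quarter]
        exact (ENNReal.ofReal_lt_ofReal_iff (lt_trans (by norm_num) hvar)).2 hvar
      exact absurd hle hlt.not_ge
    have ha1 : 0 < a 1 := by
      obtain ⟨n₁, hn₁, hpos⟩ := hK.2.2.1
      rcases Nat.lt_or_ge n₁ 2 with h | h
      · interval_cases n₁
        · exact hpos
      · rw [hvan n₁ h] at hpos; exact absurd hpos (lt_irrefl 0)
    refine ⟨a 0, a 1, hK.2.1, ha1, fun n => ?_⟩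
    match n with
    | 0 => simp
    | 1 => simp
    | (m+2) => simpa using hvan (m+2) (by omega)
  · rintro ⟨c, d, hc, hd, hform⟩
    apply le_antisymm
    · apply iSup₂_le
      intro t ht
      have htpos : 0 < t := ht
      have hden : 0 < c + d * t := by positivity
      have hle : varf a t ≤ 1/4 := by
        rw [lin_varf hform]
        set p := d * t / (c + d * t)
        nlinarith [sq_nonneg (p - 1/2)]
      calc ENNReal.ofReal (varf a t) ≤ ENNReal.ofReal (1/4) := ENNReal.ofReal_le_ofReal hle
        _ = 1/4 := ofReal_quarter
    · have htpos : (0:ℝ) < c / d := div_pos hc hd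
      have hval : varf a (c / d) = 1/4 := by
        rw [lin_varf hform, show d * (c / d) = c by field_simp]
        rw [show c / (c + c) = 1/2 by rw [← two_mul]; field_simp]
        norm_num
      calc (1/4 : ℝ≥0∞) = ENNReal.ofReal (varf a (c/d)) := by rw [hval, ofReal_quarter]
        _ ≤ ⨆ t ∈ Set.Ioi (0 : ℝ), ENNReal.ofReal (varf a t) :=
          le_iSup₂ (f := fun t (_ : t ∈ Set.Ioi (0:ℝ)) => ENNReal.ofReal (varf a t)) (c/d) htpos
end
end

section
/- Let f be a power series in the class K with radius of convergence R, which is not a polynomial, and assume M_f = lim_{t↑R} m_f(t) = +∞. Then limsup_{t↑R} σ_f(t)/m_f(t) ≥ (Ḡ(f) − 1)/(Ḡ(f) + 1), where Ḡ(f) = limsup_{k→∞} n_{k+1}/n_k (and the right-hand side is interpreted as 1 when Ḡ(f) = +∞). -/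
open Filter MeasureTheory Topology Real
open scoped ENNReal

noncomputable section

/-- `Ḡ(f) = limsup_k n_{k+1}/n_k ∈ [1,∞]`: the supremum of the extended nonnegative
reals `c` such that arbitrarily far out there is a consecutive pair `(m, n)` of
nonzero-coefficient indices with `n/m ≥ c`. -/
def GbarENN (a : ℕ → ℝ) : ℝ≥0∞ :=
  sSup {c : ℝ≥0∞ |
    ∀ N : ℕ, ∃ m n : ℕ, N ≤ m ∧ ConsecPair a m n ∧ c ≤ (n : ℝ≥0∞) / (m : ℝ≥0∞)}

namespace Clan8

variable {a : ℕ → ℝ} {R : ℝ≥0∞}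

lemma summable0 (hK : IsKClass a R) {t : ℝ} (ht : 0 ≤ t) (hlt : ENNReal.ofReal t < R) :
    Summable (fun n : ℕ => a n * t ^ n) := by
  rcases eq_or_lt_of_le ht with h | h
  · apply summable_of_ne_finset_zero (s := {0})
    intro n hn
    simp only [Finset.mem_singleton] at hn
    rw [← h, zero_pow hn, mul_zero]
  · have := hK.2.2.2.1 0 t h hlt
    simpa using this

lemma summable1 (hK : IsKClass a R) {t : ℝ} (ht : 0 < t) (hlt : ENNReal.ofReal t < R) :
    Summable (fun n : ℕ => (n : ℝ) * a n * t ^ n) := by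
  have := hK.2.2.2.1 1 t ht hlt
  simpa using this

lemma summable2 (hK : IsKClass a R) {t : ℝ} (ht : 0 < t) (hlt : ENNReal.ofReal t < R) :
    Summable (fun n : ℕ => (n : ℝ) ^ 2 * a n * t ^ n) := by
  have := hK.2.2.2.1 2 t ht hlt
  have e : ∀ n : ℕ, (n : ℝ) ^ (2 : ℝ) = (n : ℝ) ^ (2 : ℕ) := fun n => by
    rw [show (2 : ℝ) = ((2 : ℕ) : ℝ) by norm_num, Real.rpow_natCast]
  simpa [e] using this

lemma mf_eq (a : ℕ → ℝ) (t : ℝ) :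
    mf a t = (∑' n : ℕ, (n : ℝ) * a n * t ^ n) / fsum a t := by
  simp [mf, moment, Real.rpow_one]

lemma moment2_eq (a : ℕ → ℝ) (t : ℝ) :
    moment a 2 t = (∑' n : ℕ, (n : ℝ) ^ 2 * a n * t ^ n) / fsum a t := by
  unfold moment
  congr 1
  apply tsum_congr
  intro n
  rw [show (2 : ℝ) = ((2 : ℕ) : ℝ) by norm_num, Real.rpow_natCast]

lemma fsum_pos (hK : IsKClass a R) {t : ℝ} (ht : 0 ≤ t) (hlt : ENNReal.ofReal t < R) :
    0 < fsum a t := by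
  have h0 : a 0 * t ^ 0 ≤ fsum a t :=
    Summable.le_tsum (summable0 hK ht hlt) 0 (fun j _ => mul_nonneg (hK.1 j) (pow_nonneg ht j))
  have := hK.2.1
  simp only [pow_zero, mul_one] at h0
  linarith

lemma contOn_mf (hK : IsKClass a R) {t2 : ℝ} (ht2 : 0 < t2) (hlt : ENNReal.ofReal t2 < R) :
    ContinuousOn (mf a) (Set.Icc 0 t2) := by
  have ha := hK.1
  have c0 : ContinuousOn (fsum a) (Set.Icc 0 t2) := by
    apply continuousOn_tsum (u := fun n => a n * t2 ^ n)
    · intro i; exact (continuous_const.mul (continuous_pow i)).continuousOn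
    · exact summable0 hK ht2.le hlt
    · intro n t htm
      rw [Real.norm_eq_abs, abs_mul, abs_of_nonneg (ha n), abs_pow, abs_of_nonneg htm.1]
      exact mul_le_mul_of_nonneg_left (pow_le_pow_left₀ htm.1 htm.2 n) (ha n)
  have c1 : ContinuousOn (fun t => ∑' n : ℕ, (n : ℝ) * a n * t ^ n) (Set.Icc 0 t2) := by
    apply continuousOn_tsum (f := fun (n : ℕ) (t : ℝ) => (n : ℝ) * a n * t ^ n) (u := fun n : ℕ => (n : ℝ) * a n * t2 ^ n)
    · intro i; exact (continuous_const.mul (continuous_pow i)).continuousOn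
    · exact summable1 hK ht2 hlt
    · intro n t htm
      have hna : 0 ≤ (n : ℝ) * a n := mul_nonneg (Nat.cast_nonneg n) (ha n)
      have hterm : 0 ≤ (n : ℝ) * a n * t ^ n := mul_nonneg hna (pow_nonneg htm.1 n)
      rw [Real.norm_eq_abs, abs_of_nonneg hterm]
      exact mul_le_mul_of_nonneg_left (pow_le_pow_left₀ htm.1 htm.2 n) hna
  have hne : ∀ t ∈ Set.Icc 0 t2, fsum a t ≠ 0 := fun t htm =>
    (fsum_pos hK htm.1 (lt_of_le_of_lt (ENNReal.ofReal_le_ofReal htm.2) hlt)).ne'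
  have e : mf a = fun t => (∑' n : ℕ, (n : ℝ) * a n * t ^ n) / fsum a t :=
    funext (mf_eq a)
  rw [e]
  exact c1.div c0 hne

lemma var_ge (hK : IsKClass a R) {t : ℝ} (ht : 0 < t) (hlt : ENNReal.ofReal t < R)
    {m n : ℕ} (hpair : ConsecPair a m n)
    (hmf : mf a t = ((m : ℝ) + n) / 2) :
    (((n : ℝ) - m) / 2) ^ 2 ≤ varf a t := by
  set μ : ℝ := ((m : ℝ) + n) / 2 with hμdef
  set D : ℝ := ((n : ℝ) - m) / 2 with hDdef
  have s0 := summable0 hK ht.le hlt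
  have s1 := summable1 hK ht hlt
  have s2 := summable2 hK ht hlt
  have hS0 : 0 < fsum a t := fsum_pos hK ht.le hlt
  have hS1 : (∑' j : ℕ, (j : ℝ) * a j * t ^ j) = μ * fsum a t := by
    have h1 := mf_eq a t
    rw [hmf] at h1
    field_simp at h1
    linarith [h1]
  have term : ∀ j : ℕ, (D ^ 2 - μ ^ 2) * (a j * t ^ j) + 2 * μ * ((j : ℝ) * a j * t ^ j)
      ≤ (j : ℝ) ^ 2 * a j * t ^ j := by
    intro j
    rcases eq_or_ne (a j) 0 with hj | hj
    · simp [hj]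
    · have hside : j ≤ m ∨ n ≤ j := by
        by_contra hcon
        push_neg at hcon
        exact hj (hpair.2.2.2 j (by omega) (by omega))
      have hmn : (m : ℝ) < n := by exact_mod_cast hpair.2.2.1
      have hD2 : D ^ 2 ≤ ((j : ℝ) - μ) ^ 2 := by
        rcases hside with h | h
        · have hj' : (j : ℝ) ≤ m := by exact_mod_cast h
          have h1 : (0 : ℝ) ≤ (m : ℝ) - j := by linarith
          have h2 : (0 : ℝ) ≤ (n : ℝ) - j := by linarith
          nlinarith [mul_nonneg h1 h2]
        · have hj' : (n : ℝ) ≤ j := by exact_mod_cast h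
          have h1 : (0 : ℝ) ≤ (j : ℝ) - m := by linarith
          have h2 : (0 : ℝ) ≤ (j : ℝ) - n := by linarith
          nlinarith [mul_nonneg h1 h2]
      have hA : 0 ≤ a j * t ^ j := mul_nonneg (hK.1 j) (pow_nonneg ht.le j)
      nlinarith [mul_le_mul_of_nonneg_right hD2 hA]
  have hLsum : Summable (fun j : ℕ =>
      (D ^ 2 - μ ^ 2) * (a j * t ^ j) + 2 * μ * ((j : ℝ) * a j * t ^ j)) :=
    (s0.mul_left _).add (s1.mul_left _)
  have hle : (D ^ 2 - μ ^ 2) * fsum a t + 2 * μ * (∑' j : ℕ, (j : ℝ) * a j * t ^ j)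
      ≤ ∑' j : ℕ, (j : ℝ) ^ 2 * a j * t ^ j := by
    have h1 := Summable.tsum_le_tsum term hLsum s2
    rwa [Summable.tsum_add (s0.mul_left _) (s1.mul_left _), tsum_mul_left, tsum_mul_left] at h1
  have hfin : (D ^ 2 + μ ^ 2) * fsum a t ≤ ∑' j : ℕ, (j : ℝ) ^ 2 * a j * t ^ j := by
    rw [hS1] at hle
    nlinarith
  rw [varf, moment2_eq, hmf]
  rw [le_sub_iff_add_le, le_div_iff₀ hS0]
  exact hfin

lemma lt_toReal_of_ofReal_lt {t : ℝ} {R : ℝ≥0∞} (hne : R ≠ ⊤)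
    (h : ENNReal.ofReal t < R) : t < R.toReal := by
  have hR0 : R ≠ 0 := by
    intro h0; rw [h0] at h; simp at h
  have hT : 0 < R.toReal := ENNReal.toReal_pos hR0 hne
  rcases le_or_gt t 0 with h0 | h0
  · linarith
  · rw [← ENNReal.ofReal_toReal hne] at h
    exact (ENNReal.ofReal_lt_ofReal_iff_of_nonneg h0.le).mp h

lemma ofReal_lt_of_lt_toReal {t : ℝ} {R : ℝ≥0∞} (hne : R ≠ ⊤) (ht : 0 ≤ t)
    (h : t < R.toReal) : ENNReal.ofReal t < R := by
  rw [← ENNReal.ofReal_toReal hne]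
  exact (ENNReal.ofReal_lt_ofReal_iff (lt_of_le_of_lt ht h)).mpr h

lemma nhdsLT_neBot (R : ℝ≥0∞) : (nhdsLT R).NeBot := by
  unfold _root_.nhdsLT
  split_ifs with h
  · exact atTop_neBot
  · infer_instance

lemma eventually_nhdsLT (R : ℝ≥0∞) (hR : 0 < R) (t0 : ℝ) (ht0 : ENNReal.ofReal t0 < R) :
    ∀ᶠ t in nhdsLT R, t0 < t ∧ 0 < t ∧ ENNReal.ofReal t < R := by
  unfold _root_.nhdsLT
  split_ifs with h
  · filter_upwards [eventually_gt_atTop (max t0 0)] with t ht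
    exact ⟨lt_of_le_of_lt (le_max_left _ _) ht, lt_of_le_of_lt (le_max_right _ _) ht,
      by simp [h]⟩
  · have hT : 0 < R.toReal := ENNReal.toReal_pos hR.ne' h
    have ht0' : t0 < R.toReal := lt_toReal_of_ofReal_lt h ht0
    have hb : max t0 (R.toReal / 2) < R.toReal := max_lt ht0' (by linarith)
    filter_upwards [Ioo_mem_nhdsLT hb] with t ht
    have h1 : t0 < t := lt_of_le_of_lt (le_max_left _ _) ht.1
    have h2 : 0 < t := lt_of_lt_of_le (by linarith) ((le_max_right t0 (R.toReal / 2)).trans ht.1.le)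
    exact ⟨h1, h2, ofReal_lt_of_lt_toReal h h2.le ht.2⟩

lemma frequently_nhdsLT (R : ℝ≥0∞) (hR : 0 < R) {p : ℝ → Prop}
    (h : ∀ t0 : ℝ, 0 < t0 → ENNReal.ofReal t0 < R →
      ∃ t, t0 < t ∧ ENNReal.ofReal t < R ∧ p t) :
    ∃ᶠ t in nhdsLT R, p t := by
  unfold _root_.nhdsLT
  split_ifs with hT
  · rw [Filter.frequently_atTop]
    intro b
    obtain ⟨t, ht1, _, ht3⟩ := h (max b 1) (lt_of_lt_of_le one_pos (le_max_right _ _))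
      (by simp [hT])
    exact ⟨t, ((le_max_left b 1).trans ht1.le), ht3⟩
  · have hT0 : 0 < R.toReal := ENNReal.toReal_pos hR.ne' hT
    rw [(nhdsLT_basis_of_exists_lt ⟨R.toReal - 1, by linarith⟩).frequently_iff]
    intro b hb
    have h1 : 0 < max b (R.toReal / 2) :=
      lt_of_lt_of_le (by linarith) (le_max_right _ _)
    have h2 : max b (R.toReal / 2) < R.toReal := max_lt hb (by linarith)
    obtain ⟨t, ht1, ht2, ht3⟩ := h _ h1 (ofReal_lt_of_lt_toReal hT h1.le h2)
    exact ⟨t, ⟨lt_of_le_of_lt (le_max_left _ _) ht1, lt_toReal_of_ofReal_lt hT ht2⟩, ht3⟩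

lemma exists_consec (hinf : {n : ℕ | a n ≠ 0}.Infinite) (N : ℕ) :
    ∃ m n : ℕ, N ≤ m ∧ 1 ≤ m ∧ ConsecPair a m n := by
  obtain ⟨m, hm, hmN⟩ := hinf.exists_gt (max N 1)
  have hex : ∃ k, m < k ∧ a k ≠ 0 := by
    obtain ⟨k, hk, hkm⟩ := hinf.exists_gt m
    exact ⟨k, hkm, hk⟩
  refine ⟨m, Nat.find hex, le_trans (le_max_left _ _) hmN.le,
    le_trans (le_max_right _ _) hmN.le, hm, (Nat.find_spec hex).2, (Nat.find_spec hex).1, ?_⟩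
  intro j hj1 hj2
  by_contra hj
  exact Nat.find_min hex hj2 ⟨hj1, hj⟩

lemma key (a : ℕ → ℝ) (R : ℝ≥0∞) (hR : 0 < R) (hK : IsKClass a R)
    (hM : Tendsto (mf a) (nhdsLT R) atTop) (r : ℝ) (hr : 0 ≤ r)
    (hrS : ∀ N : ℕ, ∃ m n : ℕ, N ≤ m ∧ ConsecPair a m n ∧
      ENNReal.ofReal r ≤ (n : ℝ≥0∞) / (m : ℝ≥0∞)) :
    ENNReal.ofReal ((r - 1) / (r + 1)) ≤
      Filter.limsup (fun t => ENNReal.ofReal (sigmaf a t / mf a t)) (nhdsLT R) := by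
  have hNeBot : (nhdsLT R).NeBot := nhdsLT_neBot R
  apply Filter.le_limsup_of_frequently_le
  case hu_le => exact ⟨⊤, Filter.Eventually.of_forall fun t => le_top⟩
  apply frequently_nhdsLT R hR
  intro t0 ht0pos ht0R
  obtain ⟨m, n, hNm, hpair, hcr⟩ := hrS (max (⌈mf a t0⌉₊ + 1) 1)
  have hm1 : 1 ≤ m := le_trans (le_max_right _ _) hNm
  have hmn : m < n := hpair.2.2.1
  have hmn' : (m : ℝ) < n := by exact_mod_cast hmn
  have hm1' : (1 : ℝ) ≤ m := by exact_mod_cast hm1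
  have hmf0 : mf a t0 < m := by
    have h1 : mf a t0 ≤ ⌈mf a t0⌉₊ := Nat.le_ceil _
    have h2 : (⌈mf a t0⌉₊ + 1 : ℕ) ≤ m := le_trans (le_max_left _ _) hNm
    have h3 : ((⌈mf a t0⌉₊ : ℝ) + 1) ≤ m := by exact_mod_cast h2
    linarith
  have hrmn : r * m ≤ n := by
    have hm0 : (m : ℝ≥0∞) ≠ 0 := Nat.cast_ne_zero.mpr (by omega)
    rw [ENNReal.le_div_iff_mul_le (Or.inl hm0) (Or.inl (ENNReal.natCast_ne_top m))] at hcr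
    rw [← ENNReal.ofReal_natCast m, ← ENNReal.ofReal_natCast n, ← ENNReal.ofReal_mul hr] at hcr
    exact (ENNReal.ofReal_le_ofReal_iff (Nat.cast_nonneg n)).mp hcr
  set μ : ℝ := ((m : ℝ) + n) / 2 with hμdef
  have hmμ : (m : ℝ) < μ := by rw [hμdef]; linarith
  have hμpos : 0 < μ := by rw [hμdef]; linarith
  obtain ⟨t2, ht2a, ht2b⟩ :=
    ((hM.eventually_gt_atTop μ).and (eventually_nhdsLT R hR t0 ht0R)).exists
  obtain ⟨ht02, ht2pos, ht2R⟩ := ht2b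
  have hcont : ContinuousOn (mf a) (Set.Icc t0 t2) :=
    (contOn_mf hK ht2pos ht2R).mono (Set.Icc_subset_Icc ht0pos.le le_rfl)
  have hμmem : μ ∈ Set.Icc (mf a t0) (mf a t2) := ⟨by linarith, ht2a.le⟩
  obtain ⟨t, htmem, htval⟩ := intermediate_value_Icc ht02.le hcont hμmem
  have htpos : 0 < t := lt_of_lt_of_le ht0pos htmem.1
  have htR : ENNReal.ofReal t < R :=
    lt_of_le_of_lt (ENNReal.ofReal_le_ofReal htmem.2) ht2R
  have ht0t : t0 < t := by
    rcases eq_or_lt_of_le htmem.1 with h | h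
    · exfalso; rw [← h] at htval; linarith [htval, hmf0, hmμ]
    · exact h
  refine ⟨t, ht0t, htR, ?_⟩
  have hvar := var_ge hK htpos htR hpair htval
  set D : ℝ := ((n : ℝ) - m) / 2 with hDdef
  have hD0 : 0 ≤ D := by rw [hDdef]; linarith
  have hσ : D ≤ sigmaf a t := by
    have h1 : Real.sqrt (D ^ 2) ≤ Real.sqrt (varf a t) := Real.sqrt_le_sqrt hvar
    rwa [Real.sqrt_sq hD0] at h1
  have hfrac : (r - 1) / (r + 1) ≤ sigmaf a t / mf a t := by
    rw [htval]
    have h2 : D / μ ≤ sigmaf a t / μ := (div_le_div_iff_of_pos_right hμpos).mpr hσ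
    have h3 : (r - 1) / (r + 1) ≤ D / μ := by
      rw [div_le_div_iff₀ (by linarith) hμpos, hDdef, hμdef]
      nlinarith
    linarith
  exact ENNReal.ofReal_le_ofReal hfrac

end Clan8

open Clan8 in
/-- if `f ∈ K` is not a polynomial and `M_f = +∞`, then
`limsup_{t↑R} σ_f(t)/m_f(t) ≥ (Ḡ(f) − 1)/(Ḡ(f) + 1)`, where the right-hand side
is interpreted as `1` when `Ḡ(f) = +∞`. -/
theorem limsup_sigma_div_m_ge (a : ℕ → ℝ) (R : ℝ≥0∞) (hR : 0 < R)
    (hK : IsKClass a R) (hnotpoly : {n : ℕ | a n ≠ 0}.Infinite)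
    (hM : Tendsto (mf a) (nhdsLT R) atTop) :
    (GbarENN a = ⊤ →
      1 ≤ Filter.limsup (fun t => ENNReal.ofReal (sigmaf a t / mf a t)) (nhdsLT R)) ∧
    (GbarENN a ≠ ⊤ →
      ENNReal.ofReal (((GbarENN a).toReal - 1) / ((GbarENN a).toReal + 1)) ≤
        Filter.limsup (fun t => ENNReal.ofReal (sigmaf a t / mf a t)) (nhdsLT R)) := by
  set L := Filter.limsup (fun t => ENNReal.ofReal (sigmaf a t / mf a t)) (nhdsLT R) with hLdef
  set S := {c : ℝ≥0∞ |
    ∀ N : ℕ, ∃ m n : ℕ, N ≤ m ∧ ConsecPair a m n ∧ c ≤ (n : ℝ≥0∞) / (m : ℝ≥0∞)} with hSdef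
  have hGdef : GbarENN a = sSup S := rfl
  have hdown : ∀ {c c' : ℝ≥0∞}, c' ≤ c → c ∈ S → c' ∈ S := by
    intro c c' hle hc N
    obtain ⟨m, n, h1, h2, h3⟩ := hc N
    exact ⟨m, n, h1, h2, hle.trans h3⟩
  have hone : (1 : ℝ≥0∞) ∈ S := by
    intro N
    obtain ⟨m, n, hNm, hm1, hpair⟩ := exists_consec hnotpoly N
    refine ⟨m, n, hNm, hpair, ?_⟩
    rw [ENNReal.le_div_iff_mul_le (Or.inl (Nat.cast_ne_zero.mpr (by omega)))
      (Or.inl (ENNReal.natCast_ne_top m)), one_mul]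
    exact_mod_cast hpair.2.2.1.le
  have hkey : ∀ r : ℝ, 0 ≤ r → ENNReal.ofReal r ∈ S →
      ENNReal.ofReal ((r - 1) / (r + 1)) ≤ L := fun r hr hrS =>
    key a R hR hK hM r hr hrS
  constructor
  · intro hG
    by_contra hcon
    push_neg at hcon
    have hLne : L ≠ ⊤ := hcon.ne_top
    set y := L.toReal with hydef
    have hy0 : 0 ≤ y := ENNReal.toReal_nonneg
    have hy1 : y < 1 := by
      have := (ENNReal.toReal_lt_toReal hLne ENNReal.one_ne_top).mpr hcon
      simpa using this
    set b := (1 + y) / (1 - y) with hbdef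
    have hb0 : 0 < b := div_pos (by linarith) (by linarith)
    set r := b + 1 with hrdef
    have hrS : ENNReal.ofReal r ∈ S := by
      have hlt : ENNReal.ofReal r < sSup S := by
        rw [← hGdef, hG]; exact ENNReal.ofReal_lt_top
      obtain ⟨c, hcS, hc⟩ := lt_sSup_iff.mp hlt
      exact hdown hc.le hcS
    have h1 := hkey r (by linarith) hrS
    have hbmul : b * (1 - y) = 1 + y := by
      rw [hbdef, div_mul_cancel₀ _ (show (1:ℝ) - y ≠ 0 by linarith)]
    have h2 : y < (r - 1) / (r + 1) := by
      rw [lt_div_iff₀ (by rw [hrdef]; linarith)]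
      rw [hrdef]
      nlinarith
    have h3 : L < ENNReal.ofReal ((r - 1) / (r + 1)) := by
      conv_lhs => rw [← ENNReal.ofReal_toReal hLne]
      exact (ENNReal.ofReal_lt_ofReal_iff (lt_of_le_of_lt hy0 h2)).mpr h2
    exact absurd h1 h3.not_ge
  · intro hG
    set g := (GbarENN a).toReal with hgdef
    have h1G : (1 : ℝ≥0∞) ≤ GbarENN a := by rw [hGdef]; exact le_sSup hone
    have hg1 : 1 ≤ g := by
      have := ENNReal.toReal_mono hG h1G
      simpa using this
    by_contra hcon
    push_neg at hcon
    have hLne : L ≠ ⊤ := hcon.ne_top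
    set y := L.toReal with hydef
    have hy0 : 0 ≤ y := ENNReal.toReal_nonneg
    have hylt : y < (g - 1) / (g + 1) := by
      have := (ENNReal.toReal_lt_toReal hLne ENNReal.ofReal_ne_top).mpr hcon
      rwa [ENNReal.toReal_ofReal (div_nonneg (by linarith) (by linarith))] at this
    have hy1 : y < 1 :=
      lt_of_lt_of_le hylt (by rw [div_le_one (by linarith)]; linarith)
    set b := (1 + y) / (1 - y) with hbdef
    have hb0 : 0 < b := div_pos (by linarith) (by linarith)
    have hbmul : b * (1 - y) = 1 + y := by rw [hbdef, div_mul_cancel₀ _ (show (1:ℝ) - y ≠ 0 by linarith)]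
    have hbg : b < g := by
      have h' : y * (g + 1) < g - 1 := (lt_div_iff₀ (by linarith)).mp hylt
      rw [hbdef, div_lt_iff₀ (by linarith)]
      nlinarith
    have hbG : ENNReal.ofReal b < GbarENN a := by
      conv_rhs => rw [← ENNReal.ofReal_toReal hG]
      exact (ENNReal.ofReal_lt_ofReal_iff (by linarith)).mpr hbg
    rw [hGdef] at hbG
    obtain ⟨c, hcS, hbc⟩ := lt_sSup_iff.mp hbG
    have hcne : c ≠ ⊤ := ne_top_of_le_ne_top hG (by rw [hGdef]; exact le_sSup hcS)
    set r := c.toReal with hrdef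
    have hrc : ENNReal.ofReal r = c := ENNReal.ofReal_toReal hcne
    have hbr : b < r := by
      rw [← hrc] at hbc
      exact (ENNReal.ofReal_lt_ofReal_iff_of_nonneg hb0.le).mp hbc
    have h1 := hkey r (hb0.le.trans hbr.le) (hrc ▸ hcS)
    have h2 : y < (r - 1) / (r + 1) := by
      rw [lt_div_iff₀ (by linarith)]
      nlinarith
    have h3 : L < ENNReal.ofReal ((r - 1) / (r + 1)) := by
      conv_lhs => rw [← ENNReal.ofReal_toReal hLne]
      exact (ENNReal.ofReal_lt_ofReal_iff (lt_of_le_of_lt hy0 h2)).mpr h2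
    exact absurd h1 h3.not_ge
end
end

section
/- (Sakovič) Let Y be a real-valued random variable with finite variance and let θ ∈ ℝ. If E(e^{iθY}) = 0, then θ²·Var(Y) ≥ π²/4. -/
open Filter MeasureTheory Topology Real
open scoped ENNReal

lemma sakovic_key_half (t : ℝ) (ht : 0 ≤ t) : π ^ 2 / 4 ≤ t ^ 2 + π * Real.cos t := by
  rcases le_or_gt (π / 2) t with h | h
  · have h1 : Real.cos t = - Real.sin (t - π / 2) := by
      rw [← Real.sin_pi_div_two_sub]; rw [show π/2 - t = -(t - π/2) by ring, Real.sin_neg]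
    have h2 : Real.sin (t - π / 2) ≤ t - π / 2 := Real.sin_le (by linarith)
    nlinarith [pi_pos]
  rcases eq_or_lt_of_le ht with rfl | ht0
  · have := pi_gt_d6
    have := pi_lt_d2
    simp only [Real.cos_zero]
    nlinarith
  rcases le_or_gt t (π / 2 - 1) with hsmall | hbig
  · have hc : 1 - t ^ 2 / 2 ≤ Real.cos t := Real.one_sub_sq_div_two_le_cos
    have := pi_gt_d6
    have := pi_lt_d2
    nlinarith [sq_nonneg t, sq_nonneg (π/2 - 1 - t)]
  · set u := π / 2 - t with hu
    have hu0 : 0 < u := by simp [hu]; linarith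
    have hu1 : u ≤ 1 := by simp [hu]; linarith
    have hc : Real.cos t = Real.sin u := by rw [hu, Real.sin_pi_div_two_sub]
    have hs : u - u ^ 3 / 4 < Real.sin u := by
      have := Real.sin_gt_sub_cube hu0; nlinarith [pow_pos hu0 3]
    have := pi_lt_d2
    have hp : 0 < π := pi_pos
    rw [hc]
    have h4 : π * u ≤ 3.15 := by nlinarith
    have h5 : π * u - π * u ^ 3 / 4 ≤ π * Real.sin u := by nlinarith
    have h6 : t ^ 2 = π ^ 2 / 4 - π * u + u ^ 2 := by rw [hu]; ring
    have h7 : 0 ≤ u ^ 2 * (4 - π * u) := mul_nonneg (sq_nonneg u) (by nlinarith)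
    nlinarith

lemma sakovic_key (t : ℝ) : π ^ 2 / 4 ≤ t ^ 2 + π * Real.cos t := by
  rcases le_or_gt 0 t with h | h
  · exact sakovic_key_half t h
  · have := sakovic_key_half (-t) (by linarith)
    simpa using this

/-- Sakovič: if `Y` is a real random variable with finite variance and
`E(e^{iθY}) = 0`, then `θ²·Var(Y) ≥ π²/4`. -/
theorem sakovic {Ω : Type*} [MeasurableSpace Ω] (μ : Measure Ω) [IsProbabilityMeasure μ]
    (Y : Ω → ℝ) (hY : MemLp Y 2 μ) (θ : ℝ)
    (h0 : ∫ ω, Complex.exp (Complex.I * (θ : ℂ) * (Y ω : ℂ)) ∂μ = 0) :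
    Real.pi ^ 2 / 4 ≤ θ ^ 2 * ProbabilityTheory.variance Y μ := by
  set m := ∫ ω, Y ω ∂μ with hm
  set Z : Ω → ℝ := fun ω => θ * (Y ω - m) with hZ
  have hZ2 : MemLp Z 2 μ := (hY.sub (memLp_const m)).const_mul θ
  have hZsq : Integrable (fun ω => Z ω ^ 2) μ := hZ2.integrable_sq
  have hZm : AEStronglyMeasurable Z μ := hZ2.aestronglyMeasurable
  -- integrability of exp(I Z)
  have hexpm : AEStronglyMeasurable (fun ω => Complex.exp (Complex.I * (Z ω : ℂ))) μ := by
    apply (Complex.continuous_exp.comp (by continuity : Continuous fun x : ℝ =>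
      Complex.I * (x : ℂ))).comp_aestronglyMeasurable hZm
  have hexpint : Integrable (fun ω => Complex.exp (Complex.I * (Z ω : ℂ))) μ := by
    refine Integrable.mono' (integrable_const 1) hexpm ?_
    filter_upwards with ω
    rw [Complex.norm_exp]
    simp
  -- the integral of exp(I Z) is zero
  have hexp0 : ∫ ω, Complex.exp (Complex.I * (Z ω : ℂ)) ∂μ = 0 := by
    have hfac : ∀ ω, Complex.exp (Complex.I * (Z ω : ℂ)) =
        Complex.exp (Complex.I * (θ : ℂ) * (Y ω : ℂ)) * Complex.exp (-(Complex.I * θ * m)) := by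
      intro ω
      rw [← Complex.exp_add]
      congr 1
      push_cast [hZ]
      ring
    simp_rw [hfac]
    rw [integral_mul_const, h0, zero_mul]
  -- hence E cos Z = 0
  have hcosm : AEStronglyMeasurable (fun ω => Real.cos (Z ω)) μ :=
    Real.continuous_cos.comp_aestronglyMeasurable hZm
  have hcosint : Integrable (fun ω => Real.cos (Z ω)) μ := by
    refine Integrable.mono' (integrable_const 1) hcosm ?_
    filter_upwards with ω
    exact abs_le.2 ⟨by linarith [Real.neg_one_le_cos (Z ω)], Real.cos_le_one _⟩
  have hcos0 : ∫ ω, Real.cos (Z ω) ∂μ = 0 := by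
    have : ∫ ω, Real.cos (Z ω) ∂μ = (∫ ω, Complex.exp (Complex.I * (Z ω : ℂ)) ∂μ).re := by
      have h := integral_re (𝕜 := ℂ) hexpint
      simp only [RCLike.re_to_complex] at h
      rw [← h]
      congr 1
      funext ω
      rw [mul_comm, Complex.exp_ofReal_mul_I_re]
    rw [this, hexp0, Complex.zero_re]
  -- main estimate
  have hmono : π ^ 2 / 4 ≤ ∫ ω, (Z ω ^ 2 + π * Real.cos (Z ω)) ∂μ := by
    have h1 : (∫ _, (π ^ 2 / 4 : ℝ) ∂μ) = π ^ 2 / 4 := by simp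
    rw [← h1]
    exact integral_mono (integrable_const _) (hZsq.add (hcosint.const_mul π))
      (fun ω => sakovic_key (Z ω))
  rw [integral_add hZsq (hcosint.const_mul π), integral_const_mul, hcos0, mul_zero,
    add_zero] at hmono
  -- identify ∫ Z² with θ² Var Y
  have hvar : ∫ ω, Z ω ^ 2 ∂μ = θ ^ 2 * ProbabilityTheory.variance Y μ := by
    rw [ProbabilityTheory.variance_eq_integral hY.1.aemeasurable, ← integral_const_mul]
    congr 1
    funext ω
    simp [hZ, hm]
    ring
  rwa [hvar] at hmono
end

section
/- Let f be a power series in the class K with radius of convergence R, and let F(z) = Σ_{n≥0} a_n z^n denote its holomorphic extension to the disk {|z| < R} in ℂ. If for some t ∈ (0,R) and θ ∈ [−π, π] one has F(t e^{iθ}) = 0, then |θ|·σ_f(t) ≥ π/2. Consequently F does not vanish in the region { t e^{iθ} : t ∈ (0,R), |θ| < π/(2σ_f(t)) }. -/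
open Filter MeasureTheory Topology Real
open scoped ENNReal

noncomputable section

/-- The holomorphic extension `F(z) = Σ aₙ zⁿ` of `f` to the disk `{|z| < R}` in `ℂ`. -/
def Fc (a : ℕ → ℝ) (z : ℂ) : ℂ := ∑' n : ℕ, (a n : ℂ) * z ^ n

lemma keyaux (u : ℝ) (hu0 : 0 < u) (huu : u ≤ π/2) : u - u^2/π ≤ Real.sin u := by
  have hπ := Real.pi_pos
  have key : (u - Real.sin u) * π ≤ u^2 := by
    rcases le_or_gt u 1 with hu1 | hu1
    · have hc := Real.sin_gt_sub_cube hu0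
      have h4 : u * π ≤ π := by nlinarith
      have hπ315 : π < 3.15 := Real.pi_lt_d2
      have hA := mul_lt_mul_of_pos_right hc hπ
      nlinarith [mul_nonneg (sq_nonneg u) (sub_nonneg.2 h4),
        mul_nonneg (sq_nonneg u) (show (0:ℝ) ≤ 4 - π by linarith)]
    · rcases le_or_gt (π - 2) u with hu2 | hu2
      · have hj := Real.mul_le_sin hu0.le huu
        have h2u : 2*u ≤ Real.sin u * π := by
          rw [div_mul_eq_mul_div, div_le_iff₀ hπ] at hj; linarith
        nlinarith [mul_nonneg hu0.le (sub_nonneg.2 hu2)]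
      · have hmono : Real.sin 1 ≤ Real.sin u := by
          apply Real.strictMonoOn_sin.monotoneOn
          · constructor <;> [linarith; linarith]
          · constructor <;> [linarith; linarith]
          · linarith
        have hsin1 : (3:ℝ)/4 < Real.sin 1 := by
          have := Real.sin_gt_sub_cube one_pos
          nlinarith
        have hπ315 : π < 3.15 := Real.pi_lt_d2
        nlinarith [mul_nonneg (show (0:ℝ) ≤ 2 - u by linarith)
          (show (0:ℝ) ≤ π - 2 - u by linarith), mul_lt_mul_of_pos_right hsin1 hπ]
  have := (le_div_iff₀ hπ).mpr key
  linarith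

lemma keyineq_nonneg (y : ℝ) (hy : 0 ≤ y) : π/4 - y^2/π ≤ Real.cos y := by
  have hπ := Real.pi_pos
  rcases le_or_gt (π/2) y with hy2 | hy2
  · have h1 : Real.sin (y - π/2) ≤ y - π/2 := Real.sin_le (by linarith)
    have h2 : Real.cos y = - Real.sin (y - π/2) := by
      rw [Real.sin_sub_pi_div_two]; ring
    have key : (π/4 + Real.sin (y - π/2)) * π ≤ y^2 := by
      nlinarith [sq_nonneg (y - π/2)]
    have := (le_div_iff₀ hπ).mpr key
    rw [h2]; linarith
  · have hcos : Real.cos y = Real.sin (π/2 - y) := (Real.sin_pi_div_two_sub y).symm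
    have hEq : π/4 - y^2/π = (π/2 - y) - (π/2 - y)^2/π := by
      field_simp; ring
    rw [hcos, hEq]
    exact keyaux _ (by linarith) (by linarith)

lemma keyineq (y : ℝ) : π/4 - y^2/π ≤ Real.cos y := by
  rcases le_or_gt 0 y with h | h
  · exact keyineq_nonneg y h
  · have := keyineq_nonneg (-y) (by linarith)
    simpa using this


lemma part1 (a : ℕ → ℝ) (R : ℝ≥0∞) (hK : IsKClass a R) (t θ : ℝ) (ht : 0 < t)
    (hlt : ENNReal.ofReal t < R)
    (hF : Fc a ((t : ℂ) * Complex.exp ((θ : ℂ) * Complex.I)) = 0) :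
    Real.pi / 2 ≤ |θ| * sigmaf a t := by
  obtain ⟨ha, ha0, -, hsum, -⟩ := hK
  have hπ := Real.pi_pos
  have hs0 : Summable (fun n : ℕ => a n * t ^ n) := by
    have := hsum 0 t ht hlt
    simpa using this
  have hs1 : Summable (fun n : ℕ => (n : ℝ) * a n * t ^ n) := by
    have := hsum 1 t ht hlt
    simpa using this
  have hs2 : Summable (fun n : ℕ => (n : ℝ)^2 * a n * t ^ n) := by
    have := hsum 2 t ht hlt
    exact this.congr fun n => by rw [Real.rpow_two]
  have hPnn : ∀ n : ℕ, 0 ≤ a n * t ^ n := fun n =>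
    mul_nonneg (ha n) (pow_nonneg ht.le n)
  have hfpos : 0 < fsum a t :=
    Summable.tsum_pos hs0 hPnn 0 (by simpa using ha0)
  set m := mf a t with hm
  -- S1 = m * f
  have hS1 : (∑' n : ℕ, (n : ℝ) * a n * t ^ n) = m * fsum a t := by
    rw [hm]
    unfold mf moment
    rw [div_mul_cancel₀ _ hfpos.ne']
    exact (tsum_congr fun n => by rw [Real.rpow_one]).symm
  -- S2 = (varf + m^2) * f
  have hS2 : (∑' n : ℕ, (n : ℝ)^2 * a n * t ^ n) = (varf a t + m^2) * fsum a t := by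
    have hvm : varf a t + m^2 = moment a 2 t := by rw [hm]; unfold varf; ring
    rw [hvm]
    unfold moment
    rw [div_mul_cancel₀ _ hfpos.ne']
    exact (tsum_congr fun n => by rw [Real.rpow_two]).symm
  -- complex series summability
  set z := (t : ℂ) * Complex.exp ((θ : ℂ) * Complex.I) with hz
  have hnorm : ∀ n : ℕ, ‖(a n : ℂ) * z ^ n‖ = a n * t ^ n := by
    intro n
    rw [hz]
    simp [abs_of_nonneg (ha n), abs_of_nonneg ht.le, Complex.norm_exp, mul_pow]
  have hgs : Summable (fun n : ℕ => (a n : ℂ) * z ^ n) := by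
    apply Summable.of_norm
    simpa only [hnorm] using hs0
  set w := Complex.exp (-(↑(θ * m)) * Complex.I) with hw
  have hterm : ∀ n : ℕ, ((a n : ℂ) * z ^ n) * w
      = ↑(a n * t ^ n) * Complex.exp (↑(θ * ((n : ℝ) - m)) * Complex.I) := by
    intro n
    rw [hz, hw, mul_pow, ← Complex.exp_nat_mul, mul_assoc, mul_assoc, ← Complex.exp_add]
    push_cast
    ring_nf
  have hre : ∀ n : ℕ, (((a n : ℂ) * z ^ n) * w).re
      = (a n * t ^ n) * Real.cos (θ * ((n : ℝ) - m)) := by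
    intro n
    rw [hterm n, Complex.re_ofReal_mul, Complex.exp_ofReal_mul_I_re]
  have hzero : (∑' n : ℕ, (a n * t ^ n) * Real.cos (θ * ((n : ℝ) - m))) = 0 := by
    have h1 : (∑' n : ℕ, ((a n : ℂ) * z ^ n) * w) = 0 := by
      rw [tsum_mul_right]
      rw [show (∑' n : ℕ, (a n : ℂ) * z ^ n) = 0 from hF]
      simp
    have h2 := Complex.re_tsum (hgs.mul_right w)
    rw [h1] at h2
    simp only [Complex.zero_re] at h2
    have h3 : (∑' n : ℕ, (((a n : ℂ) * z ^ n) * w).re)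
        = ∑' n : ℕ, (a n * t ^ n) * Real.cos (θ * ((n : ℝ) - m)) :=
      tsum_congr fun n => hre n
    rw [← h3]
    exact h2.symm
  -- summability of quadratic series
  have hsq : Summable (fun n : ℕ => (a n * t ^ n) * ((n : ℝ) - m)^2) := by
    apply Summable.congr (((hs2.sub (hs1.mul_left (2*m))).add (hs0.mul_left (m^2))))
    intro n; ring
  -- value of quadratic series
  have hVsum : (∑' n : ℕ, (a n * t ^ n) * ((n : ℝ) - m)^2) = varf a t * fsum a t := by
    have : (fun n : ℕ => (a n * t ^ n) * ((n : ℝ) - m)^2)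
        = fun n : ℕ => ((n : ℝ)^2 * a n * t ^ n - (2*m) * ((n : ℝ) * a n * t ^ n))
            + m^2 * (a n * t ^ n) := by
      funext n; ring
    rw [this, Summable.tsum_add (hs2.sub (hs1.mul_left (2*m))) (hs0.mul_left (m^2)),
      Summable.tsum_sub hs2 (hs1.mul_left (2*m)), tsum_mul_left, tsum_mul_left, hS1, hS2]
    show _ = varf a t * fsum a t
    have : (∑' n : ℕ, a n * t ^ n) = fsum a t := rfl
    rw [this]
    ring
  -- the comparison
  have hcompare : (∑' n : ℕ, (a n * t ^ n) * (π/4 - (θ * ((n : ℝ) - m))^2/π))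
      ≤ (∑' n : ℕ, (a n * t ^ n) * Real.cos (θ * ((n : ℝ) - m))) := by
    apply Summable.tsum_le_tsum
    · intro n
      exact mul_le_mul_of_nonneg_left (keyineq _) (hPnn n)
    · apply Summable.congr (((hs0.mul_left (π/4)).sub (hsq.mul_left (θ^2/π))))
      intro n
      field_simp
    · apply Summable.of_norm_bounded hs0
      intro n
      rw [norm_mul]
      calc ‖a n * t ^ n‖ * ‖Real.cos (θ * ((n : ℝ) - m))‖
          ≤ ‖a n * t ^ n‖ * 1 := by
            exact mul_le_mul_of_nonneg_left (by rw [Real.norm_eq_abs]; exact Real.abs_cos_le_one _) (norm_nonneg _)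
        _ = a n * t ^ n := by rw [mul_one, Real.norm_eq_abs, abs_of_nonneg (hPnn n)]
  -- value of the lower series
  have hLval : (∑' n : ℕ, (a n * t ^ n) * (π/4 - (θ * ((n : ℝ) - m))^2/π))
      = π/4 * fsum a t - θ^2/π * (varf a t * fsum a t) := by
    have : (fun n : ℕ => (a n * t ^ n) * (π/4 - (θ * ((n : ℝ) - m))^2/π))
        = fun n : ℕ => π/4 * (a n * t ^ n) - θ^2/π * ((a n * t ^ n) * ((n : ℝ) - m)^2) := by
      funext n
      field_simp
    rw [this, Summable.tsum_sub (hs0.mul_left (π/4)) (hsq.mul_left (θ^2/π)), tsum_mul_left,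
      tsum_mul_left, hVsum]
    rfl
  rw [hzero, hLval] at hcompare
  -- deduce π²/4 ≤ θ² varf
  have hmain : π^2/4 ≤ θ^2 * varf a t := by
    have h1 : π/4 * fsum a t ≤ θ^2/π * (varf a t * fsum a t) := by linarith
    have h2 : π * (π/4 * fsum a t) ≤ π * (θ^2/π * (varf a t * fsum a t)) :=
      mul_le_mul_of_nonneg_left h1 hπ.le
    have h3 : π * (θ^2/π * (varf a t * fsum a t)) = (θ^2 * varf a t) * fsum a t := by
      field_simp
    rw [h3] at h2
    have h4 : π^2/4 * fsum a t ≤ (θ^2 * varf a t) * fsum a t := by linarith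
    exact le_of_mul_le_mul_right h4 hfpos
  have hv0 : 0 ≤ varf a t := by nlinarith [sq_nonneg θ]
  calc π/2 = Real.sqrt ((π/2)^2) := (Real.sqrt_sq (by positivity)).symm
    _ ≤ Real.sqrt (θ^2 * varf a t) := Real.sqrt_le_sqrt (by nlinarith)
    _ = |θ| * sigmaf a t := by
        rw [Real.sqrt_mul (sq_nonneg θ), Real.sqrt_sq_eq_abs]
        rfl

/-- if `F(t e^{iθ}) = 0` for some `t ∈ (0,R)` and `θ ∈ [−π,π]`, then
`|θ|·σ_f(t) ≥ π/2`; consequently `F` does not vanish on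
`{t e^{iθ} : t ∈ (0,R), |θ| < π/(2σ_f(t))}`. -/
theorem zero_free_region (a : ℕ → ℝ) (R : ℝ≥0∞) (hR : 0 < R) (hK : IsKClass a R) :
    (∀ t θ : ℝ, 0 < t → ENNReal.ofReal t < R → -Real.pi ≤ θ → θ ≤ Real.pi →
      Fc a ((t : ℂ) * Complex.exp ((θ : ℂ) * Complex.I)) = 0 →
        Real.pi / 2 ≤ |θ| * sigmaf a t) ∧
    (∀ t θ : ℝ, 0 < t → ENNReal.ofReal t < R → |θ| < Real.pi / (2 * sigmaf a t) →
      Fc a ((t : ℂ) * Complex.exp ((θ : ℂ) * Complex.I)) ≠ 0) := by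
  constructor
  · intro t θ ht hlt _ _ hF
    exact part1 a R hK t θ ht hlt hF
  · intro t θ ht hlt hθ hF
    have hπ := Real.pi_pos
    have hσnn : 0 ≤ sigmaf a t := Real.sqrt_nonneg _
    have hσpos : 0 < sigmaf a t := by
      rcases hσnn.lt_or_eq with h | h
      · exact h
      · exfalso
        rw [← h] at hθ
        simp only [mul_zero, div_zero] at hθ
        linarith [abs_nonneg θ]
    have h2π : (0:ℝ) < 2 * π := by positivity
    set θ' := toIocMod h2π (-π) θ with hθ'def
    have hmem := toIocMod_mem_Ioc h2π (-π) θ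
    have hmem' : θ' ∈ Set.Ioc (-π) π := by
      rw [hθ'def]
      convert hmem using 2
      exacts [rfl, by ring]
    set k := toIocDiv h2π (-π) θ with hkdef
    have hk : θ - θ' = (k:ℝ) * (2*π) := by
      have := self_sub_toIocMod h2π (-π) θ
      rw [zsmul_eq_mul] at this
      exact this
    have hθ'le : |θ'| ≤ π := abs_le.mpr ⟨hmem'.1.le, hmem'.2⟩
    have habs : |θ'| ≤ |θ| := by
      rcases eq_or_ne k 0 with h0 | h0
      · have : θ = θ' := by
          rw [h0] at hk
          push_cast at hk
          linarith
        rw [this]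
      · have hk1 : (1:ℝ) ≤ |(k:ℝ)| := by exact_mod_cast Int.one_le_abs h0
        have hd : 2*π ≤ |θ - θ'| := by
          rw [hk, abs_mul, abs_of_pos h2π]
          nlinarith
        have htri : |θ - θ'| ≤ |θ| + |θ'| :=
          (abs_add_le θ (-θ')).trans_eq (by rw [abs_neg]) |>.trans_eq' (by rw [sub_eq_add_neg])
        linarith
    have hexp : Complex.exp ((θ:ℂ) * Complex.I) = Complex.exp ((θ':ℂ) * Complex.I) := by
      have hθeq : θ = θ' + (k:ℝ) * (2*π) := by linarith
      have hc : (θ:ℂ) * Complex.I = (θ':ℂ) * Complex.I + (k:ℂ) * (2*(π:ℂ)) * Complex.I := by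
        rw [show (θ:ℂ) = ((θ' + (k:ℝ) * (2*π) : ℝ) : ℂ) by exact_mod_cast congrArg Complex.ofReal hθeq]
        push_cast
        ring
      rw [hc, Complex.exp_add,
        show (k:ℂ) * (2*(π:ℂ)) * Complex.I = (k:ℂ) * (2*(π:ℂ) * Complex.I) by ring,
        Complex.exp_int_mul_two_pi_mul_I, mul_one]
    have hFz : Fc a ((t : ℂ) * Complex.exp ((θ' : ℂ) * Complex.I)) = 0 := by
      rw [← hexp]
      exact hF
    have h1 := part1 a R hK t θ' ht hlt hFz
    have hA : |θ| * (2 * sigmaf a t) < π := (lt_div_iff₀ (by positivity)).mp hθ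
    have hB : |θ'| * sigmaf a t ≤ |θ| * sigmaf a t :=
      mul_le_mul_of_nonneg_right habs hσnn
    nlinarith
end
end
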